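/- arXiv:2112.13475 — 6 statements merged into one kernel-verified Lean document; each statement's English description precedes it below -/
import Mathlib

section
/- The integral ∫_ℝ |ψ̂(λ)|² |λ|^{β−1} dλ is finite and lim_{j→∞} 2^{jβ} ∫_ℝ f_G(λ) |ψ̂(2^j λ)|² dλ = C_G(0) ∫_ℝ |ψ̂(λ)|² |λ|^{β−1} dλ, where the limit is taken over natural numbers j. -/
/-!
Substituting `x = 2ʲ l` and using the homogeneity `f_G(l) = C_G(l) |l|^{β-1}` turns
`2^{jβ} ∫ f_G(l) |ψ̂(2ʲ l)|² dl` into `∫ C_G(2⁻ʲ x) |x|^{β-1} |ψ̂(x)|² dx` exactly. Since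
`|ψ̂(x)|² |x|^{β-1} ≤ K² e^{-2κ|x|} |x|^{2α+β-1}` is integrable and `C_G` is bounded and
continuous, dominated convergence gives the limit `C_G(0) ∫ |ψ̂(x)|² |x|^{β-1} dx`.
-/

open MeasureTheory Filter

/-- Fourier transform `ψ̂(λ) = ∫ e^{-iλt} ψ(t) dt`. -/
noncomputable def fhat (ψ : ℝ → ℝ) (l : ℝ) : ℂ :=
  ∫ t : ℝ, Complex.exp (-(Complex.I * (l : ℂ) * (t : ℂ))) * (ψ t : ℂ)

lemma integrable_comp_abs_of_integrableOn_Ioi {E : Type*} [NormedAddCommGroup E] {f : ℝ → E}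
    (hf : IntegrableOn f (Set.Ioi 0)) : Integrable fun x => f |x| := by
  have hIoi : IntegrableOn (fun x => f |x|) (Set.Ioi 0) :=
    hf.congr_fun (fun x hx => by rw [abs_of_pos (Set.mem_Ioi.mp hx)]) measurableSet_Ioi
  rw [← integrableOn_univ, ← Set.Iio_union_Ici (a := (0 : ℝ)), integrableOn_union,
    integrableOn_Ici_iff_integrableOn_Ioi]
  refine ⟨?_, hIoi⟩
  rw [← (Measure.measurePreserving_neg (volume : Measure ℝ)).integrableOn_comp_preimage
    (Homeomorph.neg ℝ).measurableEmbedding]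
  simpa [Function.comp_def] using hIoi

lemma integrable_abs_rpow_mul_exp_neg_mul_abs {s b : ℝ} (hs : -1 < s) (hb : 0 < b) :
    Integrable fun x : ℝ => |x| ^ s * Real.exp (-b * |x|) :=
  integrable_comp_abs_of_integrableOn_Ioi (f := fun x => x ^ s * Real.exp (-b * x)) <| by
    simpa using integrableOn_rpow_mul_exp_neg_mul_rpow (p := 1) hs one_pos hb

lemma integrable_norm_sq_mul_abs_rpow_of_norm_le {E : Type*} [NormedAddCommGroup E]
    {F : ℝ → E} {α γ K κ : ℝ} (hF : AEStronglyMeasurable F) (hκ : 0 < κ)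
    (hαγ : -1 < 2 * α + γ) (hF_le : ∀ l, ‖F l‖ ≤ K * Real.exp (-κ * |l|) * |l| ^ α) :
    Integrable fun l => ‖F l‖ ^ 2 * |l| ^ γ := by
  have hmeas : AEStronglyMeasurable fun l => ‖F l‖ ^ 2 * |l| ^ γ :=
    (hF.norm.pow 2).mul (by fun_prop : Measurable fun l : ℝ => |l| ^ γ).aestronglyMeasurable
  refine ((integrable_abs_rpow_mul_exp_neg_mul_abs hαγ (by linarith : 0 < 2 * κ)).const_mul
    (K ^ 2)).mono' hmeas ?_
  filter_upwards [Measure.ae_ne volume 0] with l hl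
  have hl' : 0 < |l| := abs_pos.mpr hl
  have hpow : |l| ^ (2 * α + γ) = (|l| ^ α) ^ 2 * |l| ^ γ := by
    rw [mul_comm (2 : ℝ) α, Real.rpow_add hl', Real.rpow_mul hl'.le, Real.rpow_two]
  have hexp : Real.exp (-(2 * κ) * |l|) = Real.exp (-κ * |l|) ^ 2 := by
    rw [← Real.exp_nat_mul]
    ring_nf
  calc ‖‖F l‖ ^ 2 * |l| ^ γ‖ = ‖F l‖ ^ 2 * |l| ^ γ := by
        rw [Real.norm_eq_abs, abs_of_nonneg (by positivity)]
    _ ≤ (K * Real.exp (-κ * |l|) * |l| ^ α) ^ 2 * |l| ^ γ := by gcongr; exact hF_le l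
    _ = K ^ 2 * (|l| ^ (2 * α + γ) * Real.exp (-(2 * κ) * |l|)) := by
        rw [hpow, hexp]
        ring

lemma rpow_mul_integral_mul_comp_mul_left {f C : ℝ → ℝ} {β : ℝ}
    (hf : ∀ x ≠ 0, f x = C x * |x| ^ (β - 1)) (h : ℝ → ℝ) {a : ℝ} (ha : 0 < a) :
    a ^ β * ∫ l, f l * h (a * l) = ∫ x, C (a⁻¹ * x) * (|x| ^ (β - 1) * h x) := by
  have hsubst : ∫ l, f l * h (a * l) = a⁻¹ * ∫ x, f (a⁻¹ * x) * h x := by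
    have := Measure.integral_comp_mul_left (fun x => f (a⁻¹ * x) * h x) a
    simp only [inv_mul_cancel_left₀ ha.ne'] at this
    rw [this, smul_eq_mul, abs_of_pos (inv_pos.mpr ha)]
  have hweight : ∀ᵐ x, f (a⁻¹ * x) * h x
      = (a ^ β)⁻¹ * a * (C (a⁻¹ * x) * (|x| ^ (β - 1) * h x)) := by
    filter_upwards [Measure.ae_ne volume 0] with x hx
    rw [hf _ (mul_ne_zero (inv_ne_zero ha.ne') hx), abs_mul, abs_of_pos (inv_pos.mpr ha),
      Real.mul_rpow (inv_pos.mpr ha).le (abs_nonneg x), Real.rpow_sub_one (inv_pos.mpr ha).ne',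
      Real.inv_rpow ha.le]
    field_simp
  rw [hsubst, integral_congr_ae hweight, integral_const_mul]
  field_simp

lemma tendsto_integral_comp_mul_mul {ι : Type*} {l : Filter ι} [l.IsCountablyGenerated]
    {C g : ℝ → ℝ} {M : ℝ} (hC : Continuous C) (hCM : ∀ x, |C x| ≤ M) (hg : Integrable g)
    {u : ι → ℝ} (hu : Tendsto u l (nhds 0)) :
    Tendsto (fun j => ∫ x, C (u j * x) * g x) l (nhds (C 0 * ∫ x, g x)) := by
  rw [← integral_const_mul]
  refine tendsto_integral_filter_of_dominated_convergence (fun x => M * |g x|)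
    (Eventually.of_forall fun j => (hC.comp (continuous_const.mul continuous_id)
      ).aestronglyMeasurable.mul hg.aestronglyMeasurable) ?_ (hg.abs.const_mul M) ?_
  · exact Eventually.of_forall fun j => Eventually.of_forall fun x => by
      rw [norm_mul, Real.norm_eq_abs, Real.norm_eq_abs]
      exact mul_le_mul_of_nonneg_right (hCM _) (abs_nonneg _)
  · refine Eventually.of_forall fun x => Tendsto.mul_const _ ((hC.tendsto 0).comp ?_)
    simpa using hu.mul_const x

theorem stmt_1_general
    (β : ℝ) (hβ : β ∈ Set.Ioo (0 : ℝ) 1)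
    (C_G : ℝ → ℝ) (hCG_cont : Continuous C_G) (hCG_bdd : ∃ M : ℝ, ∀ x, C_G x ≤ M)
    (hCG_nonneg : ∀ x, 0 ≤ C_G x)
    (f_G : ℝ → ℝ)
    (hfG : ∀ x : ℝ, x ≠ 0 → f_G x = C_G x * |x| ^ (β - 1))
    (ψ : ℝ → ℝ)
    (α K κ : ℝ) (hα : 1 ≤ α) (hκ : 0 < κ)
    (Cψ : ℝ → ℂ) (hCψ_cont : Continuous Cψ)
    (hCψ_bdd : ∀ l : ℝ, ‖Cψ l‖ ≤ K * Real.exp (-κ * |l|))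
    (hhat : ∀ l : ℝ, fhat ψ l = Cψ l * ((|l| ^ α : ℝ) : ℂ)) :
    Integrable (fun l : ℝ => ‖fhat ψ l‖ ^ 2 * |l| ^ (β - 1)) ∧
    Tendsto
      (fun j : ℕ =>
        (2 : ℝ) ^ ((j : ℝ) * β) *
          ∫ l : ℝ, f_G l * ‖fhat ψ ((2 : ℝ) ^ j * l)‖ ^ 2)
      atTop
      (nhds (C_G 0 * ∫ l : ℝ, ‖fhat ψ l‖ ^ 2 * |l| ^ (β - 1))) := by
  have hint : Integrable (fun l : ℝ => ‖fhat ψ l‖ ^ 2 * |l| ^ (β - 1)) := by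
    refine integrable_norm_sq_mul_abs_rpow_of_norm_le (α := α) (K := K) ?_ hκ
      (by linarith [hβ.1]) fun l => ?_
    · rw [funext hhat]
      exact (hCψ_cont.mul (Complex.continuous_ofReal.comp
        (continuous_abs.rpow_const fun _ => Or.inr (by linarith)))).aestronglyMeasurable
    · rw [hhat, norm_mul, Complex.norm_real, Real.norm_of_nonneg (by positivity)]
      exact mul_le_mul_of_nonneg_right (hCψ_bdd l) (by positivity)
  refine ⟨hint, ?_⟩
  obtain ⟨M, hM⟩ := hCG_bdd
  have hlim := tendsto_integral_comp_mul_mul hCG_cont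
    (fun x => (abs_of_nonneg (hCG_nonneg x)).trans_le (hM x)) hint
    (tendsto_inv_atTop_zero.comp (tendsto_pow_atTop_atTop_of_one_lt one_lt_two))
  refine hlim.congr fun j => ?_
  have hscale := rpow_mul_integral_mul_comp_mul_left hfG (fun x => ‖fhat ψ x‖ ^ 2)
    (pow_pos two_pos j)
  rw [Real.rpow_mul zero_le_two, Real.rpow_natCast, hscale]
  simp only [Function.comp_apply, mul_comm (|_| ^ (β - 1))]

theorem stmt_1
    (β : ℝ) (hβ : β ∈ Set.Ioo (0 : ℝ) 1)
    (C_G : ℝ → ℝ) (hCG_cont : Continuous C_G) (hCG_bdd : ∃ M : ℝ, ∀ x, C_G x ≤ M)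
    (hCG_nonneg : ∀ x, 0 ≤ C_G x) (hCG_even : ∀ x, C_G (-x) = C_G x)
    (hCG0 : 0 < C_G 0)
    (f_G : ℝ → ℝ) (hfG_nonneg : ∀ x, 0 ≤ f_G x)
    (hfG : ∀ x : ℝ, x ≠ 0 → f_G x = C_G x * |x| ^ (β - 1))
    (hfG_int : Integrable f_G)
    (ψ : ℝ → ℝ) (hψ_int : Integrable ψ) (hψ_sq : Integrable (fun t => (ψ t) ^ 2))
    (hψ_zero : (∫ t : ℝ, ψ t) = 0)
    (α K κ : ℝ) (hα : 1 ≤ α) (hK : 0 < K) (hκ : 0 < κ)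
    (Cψ : ℝ → ℂ) (hCψ_cont : Continuous Cψ)
    (hCψ0 : 0 < (Cψ 0).re ∧ (Cψ 0).im = 0)
    (hCψ_bdd : ∀ l : ℝ, ‖Cψ l‖ ≤ K * Real.exp (-κ * |l|))
    (hhat : ∀ l : ℝ, fhat ψ l = Cψ l * ((|l| ^ α : ℝ) : ℂ)) :
    Integrable (fun l : ℝ => ‖fhat ψ l‖ ^ 2 * |l| ^ (β - 1)) ∧
    Tendsto
      (fun j : ℕ =>
        (2 : ℝ) ^ ((j : ℝ) * β) *
          ∫ l : ℝ, f_G l * ‖fhat ψ ((2 : ℝ) ^ j * l)‖ ^ 2)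
      atTop
      (nhds (C_G 0 * ∫ l : ℝ, ‖fhat ψ l‖ ^ 2 * |l| ^ (β - 1))) :=
  stmt_1_general β hβ C_G hCG_cont hCG_bdd hCG_nonneg f_G hfG ψ α K κ hα hκ Cψ hCψ_cont hCψ_bdd hhat
end

section
/- Assume β > 1/2, and for each ℓ ≥ 2 let B_ℓ be any bounded continuous function on ℝ with f_G^{⋆ℓ}(λ) = B_ℓ(λ) for almost every λ. Define V_j := Σ_{ℓ=2}^{∞} c_ℓ² ∫_ℝ f_G^{⋆ℓ}(λ) |ψ̂(2^j λ)|² dλ. Then lim_{j→∞} 2^j · V_j = (Σ_{ℓ=2}^{∞} c_ℓ² B_ℓ(0)) · ∫_ℝ |ψ̂(λ)|² dλ. -/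
open MeasureTheory Filter

/-- Convolution of two real functions on ℝ. -/
noncomputable def conv (f g : ℝ → ℝ) (x : ℝ) : ℝ := ∫ y : ℝ, f (x - y) * g y

/-- ℓ-fold convolution of `f` with itself: `iterConv f 1 = f`,
`iterConv f (ℓ+1) = (iterConv f ℓ) ⋆ f`. Junk value `0` at `ℓ = 0`. -/
noncomputable def iterConv (f : ℝ → ℝ) : ℕ → ℝ → ℝ
  | 0 => fun _ => 0
  | 1 => f
  | (n + 2) => conv (iterConv f (n + 1)) f

/-! After the substitution `λ = 2^{-j} μ`, `2^j V_j = ∑ c_ℓ² ∫ B_ℓ(2^{-j} μ) |ψ̂(μ)|² dμ`.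
Since `β > 1/2`, `f_G` is square-integrable, so `f_G ⋆ f_G ≤ ‖f_G‖₂²` pointwise, and convolving
further with the probability density `f_G` keeps this bound: every `B_ℓ` is bounded by `‖f_G‖₂²`,
uniformly in `ℓ`. The exponential decay of `ψ̂` makes `|ψ̂|²` integrable, so dominated convergence,
first in `μ` and then in `ℓ` against the summable weights `c_ℓ²`, gives the limit. -/

lemma conv_eq_convolution (f g : ℝ → ℝ) :
    conv f g = convolution g f (ContinuousLinearMap.mul ℝ ℝ) volume := by
  ext x
  simp only [conv, convolution, ContinuousLinearMap.mul_apply', mul_comm]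

lemma integrable_conv {f g : ℝ → ℝ} (hf : Integrable f) (hg : Integrable g) :
    Integrable (conv f g) := by
  rw [conv_eq_convolution]
  exact hg.integrable_convolution _ hf

lemma integral_conv {f g : ℝ → ℝ} (hf : Integrable f) (hg : Integrable g) :
    ∫ x, conv f g x = (∫ x, f x) * ∫ x, g x := by
  rw [conv_eq_convolution, integral_convolution _ hg hf, ContinuousLinearMap.mul_apply', mul_comm]

lemma conv_nonneg {f g : ℝ → ℝ} (hf : ∀ x, 0 ≤ f x) (hg : ∀ x, 0 ≤ g x) (x : ℝ) :
    0 ≤ conv f g x :=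
  integral_nonneg fun _ => mul_nonneg (hf _) (hg _)

lemma conv_le_mul_integral {f g : ℝ → ℝ} {M : ℝ} (hf0 : ∀ x, 0 ≤ f x) (hfM : ∀ x, f x ≤ M)
    (hg : Integrable g) (hg0 : ∀ x, 0 ≤ g x) (x : ℝ) :
    conv f g x ≤ M * ∫ y, g y := by
  rw [← integral_const_mul]
  exact integral_mono_of_nonneg (ae_of_all _ fun y => mul_nonneg (hf0 _) (hg0 y))
    (hg.const_mul M) (ae_of_all _ fun y => mul_le_mul_of_nonneg_right (hfM _) (hg0 y))

lemma conv_self_le_integral_sq {f : ℝ → ℝ} (hf0 : ∀ x, 0 ≤ f x)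
    (hf2 : Integrable fun x => f x ^ 2) (x : ℝ) :
    conv f f x ≤ ∫ y, f y ^ 2 := by
  have hshift : Integrable fun y => f (x - y) ^ 2 := hf2.comp_sub_left x
  calc conv f f x ≤ ∫ y, (f (x - y) ^ 2 + f y ^ 2) / 2 :=
        integral_mono_of_nonneg (ae_of_all _ fun y => mul_nonneg (hf0 _) (hf0 y))
          ((hshift.add hf2).div_const 2)
          (ae_of_all _ fun y => by nlinarith [sq_nonneg (f (x - y) - f y)])
    _ = ∫ y, f y ^ 2 := by
        rw [integral_div, integral_add hshift hf2,
          integral_sub_left_eq_self (fun y => f y ^ 2) volume x]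
        ring

section iterConv

variable {f : ℝ → ℝ}

lemma iterConv_add_two (f : ℝ → ℝ) (n : ℕ) :
    iterConv f (n + 2) = conv (iterConv f (n + 1)) f := rfl

lemma iterConv_nonneg (hf0 : ∀ x, 0 ≤ f x) : ∀ n x, 0 ≤ iterConv f n x
  | 0, _ => le_rfl
  | 1, x => hf0 x
  | n + 2, x => conv_nonneg (iterConv_nonneg hf0 (n + 1)) hf0 x

lemma integrable_iterConv (hf : Integrable f) : ∀ n, Integrable (iterConv f n)
  | 0 => integrable_zero _ _ _
  | 1 => hf
  | n + 2 => integrable_conv (integrable_iterConv hf (n + 1)) hf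

lemma integral_iterConv (hf : Integrable f) (n : ℕ) :
    ∫ x, iterConv f (n + 1) x = (∫ x, f x) ^ (n + 1) := by
  induction n with
  | zero => simp [iterConv]
  | succ n ih => rw [iterConv_add_two, integral_conv (integrable_iterConv hf _) hf, ih, ← pow_succ]

lemma iterConv_le (hf : Integrable f) (hf0 : ∀ x, 0 ≤ f x) (hf2 : Integrable fun x => f x ^ 2)
    (n : ℕ) (x : ℝ) :
    iterConv f (n + 2) x ≤ (∫ y, f y) ^ n * ∫ y, f y ^ 2 := by
  induction n generalizing x with
  | zero =>
    show conv f f x ≤ _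
    simpa only [pow_zero, one_mul] using conv_self_le_integral_sq hf0 hf2 x
  | succ n ih =>
    rw [iterConv_add_two]
    calc conv (iterConv f (n + 2)) f x ≤ ((∫ y, f y) ^ n * ∫ y, f y ^ 2) * ∫ y, f y :=
          conv_le_mul_integral (iterConv_nonneg hf0 _) ih hf hf0 x
      _ = (∫ y, f y) ^ (n + 1) * ∫ y, f y ^ 2 := by ring

end iterConv

lemma Continuous.le_of_ae_le {X Y : Type*} [TopologicalSpace X] [MeasurableSpace X]
    {μ : Measure X} [μ.IsOpenPosMeasure] [TopologicalSpace Y] [Preorder Y] [OrderClosedTopology Y]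
    {f g : X → Y} (hf : Continuous f) (hg : Continuous g) (h : f ≤ᵐ[μ] g) : f ≤ g := by
  intro x
  have hx : x ∈ closure {x | f x ≤ g x} := (μ.dense_of_ae h).closure_eq ▸ Set.mem_univ x
  rwa [(isClosed_le hf hg).closure_eq] at hx

lemma integrable_sq_of_le_mul_abs_rpow {f : ℝ → ℝ} {M s : ℝ} (hs : -1 / 2 < s) (hs0 : s ≤ 0)
    (hf : Integrable f) (hf0 : ∀ x, 0 ≤ f x) (hfM : ∀ x, x ≠ 0 → f x ≤ M * |x| ^ s) :
    Integrable fun x => f x ^ 2 := by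
  have hM : 0 ≤ M := by simpa using (hf0 1).trans (hfM 1 one_ne_zero)
  -- `1 ≤ e * exp (-|x|)` for `|x| ≤ 1`, while `f ≤ M`, hence `f² ≤ M f`, for `|x| ≥ 1`
  have hbound : Integrable fun x : ℝ =>
      M ^ 2 * Real.exp 1 * (|x| ^ (2 * s) * Real.exp (-1 * |x|)) + M * f x :=
    ((integrable_abs_rpow_mul_exp_neg_mul_abs (by linarith) one_pos).const_mul _).add
      (hf.const_mul M)
  refine hbound.mono' (hf.aestronglyMeasurable.pow 2) ?_
  filter_upwards [Measure.ae_ne volume 0] with x hx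
  have hfx := hfM x hx
  have hpow : |x| ^ (2 * s) = (|x| ^ s) ^ 2 := by
    rw [mul_comm, Real.rpow_mul (abs_nonneg x)]; norm_cast
  rw [Real.norm_of_nonneg (sq_nonneg _)]
  rcases le_or_gt |x| 1 with hx1 | hx1
  · have hexp : 1 ≤ Real.exp 1 * Real.exp (-1 * |x|) := by
      rw [← Real.exp_add]; exact Real.one_le_exp (by linarith)
    calc f x ^ 2 ≤ (M * |x| ^ s) ^ 2 := pow_le_pow_left₀ (hf0 x) hfx 2
      _ = M ^ 2 * |x| ^ (2 * s) * 1 := by rw [hpow]; ring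
      _ ≤ M ^ 2 * |x| ^ (2 * s) * (Real.exp 1 * Real.exp (-1 * |x|)) := by gcongr
      _ ≤ _ := le_add_of_le_of_nonneg (le_of_eq (by ring)) (mul_nonneg hM (hf0 x))
  · have hfx' : f x ≤ M :=
      hfx.trans (mul_le_of_le_one_right hM (Real.rpow_le_one_of_one_le_of_nonpos hx1.le hs0))
    calc f x ^ 2 ≤ M * f x := by rw [sq]; exact mul_le_mul_of_nonneg_right hfx' (hf0 x)
      _ ≤ _ := le_add_of_nonneg_left (by positivity)

lemma integrable_norm_mul_abs_rpow_sq {C : ℝ → ℂ} {α K κ : ℝ} (hC : AEStronglyMeasurable C)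
    (hCK : ∀ l, ‖C l‖ ≤ K * Real.exp (-κ * |l|)) (hκ : 0 < κ) (hα : -1 / 2 < α) :
    Integrable fun l : ℝ => ‖C l * ((|l| ^ α : ℝ) : ℂ)‖ ^ 2 := by
  have hbound := (integrable_abs_rpow_mul_exp_neg_mul_abs (s := 2 * α) (by linarith)
    (mul_pos two_pos hκ)).const_mul (K ^ 2)
  refine hbound.mono' ?_ (ae_of_all _ fun l => ?_)
  · exact ((hC.mul (Complex.measurable_ofReal.comp
      (measurable_abs.pow_const α)).aestronglyMeasurable).norm).pow 2
  · rw [Real.norm_of_nonneg (sq_nonneg _), norm_mul, Complex.norm_real,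
      Real.norm_of_nonneg (by positivity), mul_pow]
    have hpow : |l| ^ (2 * α) = (|l| ^ α) ^ 2 := by
      rw [mul_comm, Real.rpow_mul (abs_nonneg l)]; norm_cast
    have hexp : Real.exp (-(2 * κ) * |l|) = Real.exp (-κ * |l|) ^ 2 := by
      rw [← Real.exp_nat_mul]; ring_nf
    rw [hpow, hexp]
    calc ‖C l‖ ^ 2 * (|l| ^ α) ^ 2
        ≤ (K * Real.exp (-κ * |l|)) ^ 2 * (|l| ^ α) ^ 2 := by gcongr; exact hCK l
      _ = K ^ 2 * ((|l| ^ α) ^ 2 * Real.exp (-κ * |l|) ^ 2) := by ring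

lemma mul_integral_mul_comp_mul (B g : ℝ → ℝ) {t : ℝ} (ht : 0 < t) :
    t * ∫ l, B l * g (t * l) = ∫ μ, B (t⁻¹ * μ) * g μ := by
  have h := Measure.integral_comp_mul_left (fun μ => B (t⁻¹ * μ) * g μ) t
  simp only [inv_mul_cancel_left₀ ht.ne', smul_eq_mul, abs_of_pos (inv_pos.mpr ht)] at h
  rw [h, mul_inv_cancel_left₀ ht.ne']

section Scaling

variable {B g : ℝ → ℝ} {M : ℝ}

lemma norm_integral_comp_mul_mul_le (hBM : ∀ x, |B x| ≤ M) (hg : Integrable g) (t : ℝ) :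
    ‖∫ μ, B (t * μ) * g μ‖ ≤ M * ∫ μ, ‖g μ‖ := by
  rw [← integral_const_mul]
  refine norm_integral_le_of_norm_le (hg.norm.const_mul M) (ae_of_all _ fun μ => ?_)
  rw [norm_mul, Real.norm_eq_abs (B _)]
  exact mul_le_mul_of_nonneg_right (hBM _) (norm_nonneg _)

lemma tendsto_integral_comp_mul_mul_s5 {ι : Type*} {L : Filter ι} [L.IsCountablyGenerated]
    {r : ι → ℝ} (hB : Continuous B) (hBM : ∀ x, |B x| ≤ M) (hg : Integrable g)
    (hr : Tendsto r L (nhds 0)) :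
    Tendsto (fun i => ∫ μ, B (r i * μ) * g μ) L (nhds (∫ μ, B 0 * g μ)) := by
  refine tendsto_integral_filter_of_dominated_convergence (fun μ => M * ‖g μ‖)
    (Eventually.of_forall fun i => ?_) (Eventually.of_forall fun i => ae_of_all _ fun μ => ?_)
    (hg.norm.const_mul M) (ae_of_all _ fun μ => ?_)
  · exact ((hB.comp (continuous_const.mul continuous_id)).aestronglyMeasurable).mul
      hg.aestronglyMeasurable
  · rw [norm_mul, Real.norm_eq_abs (B _)]
    exact mul_le_mul_of_nonneg_right (hBM _) (norm_nonneg _)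
  · have : Tendsto (fun i => r i * μ) L (nhds 0) := by simpa using hr.mul_const μ
    exact ((hB.tendsto 0).comp this).mul_const (g μ)

theorem tendsto_mul_tsum_integral_mul_comp_mul {ι : Type*} {L : Filter ι}
    [L.IsCountablyGenerated] {s : ι → ℝ} {B : ℕ → ℝ → ℝ} {w : ℕ → ℝ} (hw : Summable w)
    (hB : ∀ n, Continuous (B n)) (hBM : ∀ n x, |B n x| ≤ M) (hg : Integrable g)
    (hs : Tendsto s L atTop) :
    Tendsto (fun i => s i * ∑' n, w n * ∫ l, B n l * g (s i * l)) L
      (nhds ((∑' n, w n * B n 0) * ∫ l, g l)) := by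
  set T : ι → ℕ → ℝ := fun i n => w n * ∫ μ, B n ((s i)⁻¹ * μ) * g μ
  have hT : ∀ᶠ i in L, s i * ∑' n, w n * ∫ l, B n l * g (s i * l) = ∑' n, T i n := by
    filter_upwards [hs.eventually_gt_atTop 0] with i hi
    rw [← tsum_mul_left]
    exact tsum_congr fun n => by rw [mul_left_comm, mul_integral_mul_comp_mul _ _ hi]
  have hlim : ∀ n, Tendsto (fun i => T i n) L (nhds (w n * B n 0 * ∫ l, g l)) := fun n => by
    rw [mul_assoc, ← integral_const_mul]
    exact (tendsto_integral_comp_mul_mul_s5 (hB n) (hBM n) hg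
      (tendsto_inv_atTop_zero.comp hs)).const_mul (w n)
  have hdom : ∀ i n, ‖T i n‖ ≤ |w n| * (M * ∫ μ, ‖g μ‖) := fun i n => by
    rw [norm_mul, Real.norm_eq_abs]
    exact mul_le_mul_of_nonneg_left (norm_integral_comp_mul_mul_le (hBM n) hg _) (abs_nonneg _)
  rw [← tsum_mul_right]
  exact (tendsto_tsum_of_dominated_convergence (hw.abs.mul_right _) hlim
    (Eventually.of_forall hdom)).congr' (hT.mono fun i hi => hi.symm)

end Scaling

theorem stmt_5_general
    (β : ℝ) (hβ : β ∈ Set.Ioo (0 : ℝ) 1) (hβhalf : 1 / 2 < β)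
    (C_G : ℝ → ℝ) (hCG_bdd : ∃ M : ℝ, ∀ x, C_G x ≤ M)
    (f_G : ℝ → ℝ) (hfG_nonneg : ∀ x, 0 ≤ f_G x)
    (hfG : ∀ x : ℝ, x ≠ 0 → f_G x = C_G x * |x| ^ (β - 1))
    (hfG_int : Integrable f_G) (hfG_one : (∫ l : ℝ, f_G l) = 1)
    (ψ : ℝ → ℝ)
    (α K κ : ℝ) (hα : 1 ≤ α) (hκ : 0 < κ)
    (Cψ : ℝ → ℂ) (hCψ_cont : Continuous Cψ)
    (hCψ_bdd : ∀ l : ℝ, ‖Cψ l‖ ≤ K * Real.exp (-κ * |l|))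
    (hhat : ∀ l : ℝ, fhat ψ l = Cψ l * ((|l| ^ α : ℝ) : ℂ))
    (c : ℕ → ℝ) (hc : Summable (fun ℓ : ℕ => (c (ℓ + 2)) ^ 2))
    (B : ℕ → ℝ → ℝ)
    (hB_cont : ∀ ℓ : ℕ, 2 ≤ ℓ → Continuous (B ℓ))
    (hB : ∀ ℓ : ℕ, 2 ≤ ℓ → ∀ᵐ l : ℝ ∂volume, iterConv f_G ℓ l = B ℓ l)
    (V : ℕ → ℝ)
    (hV : ∀ j : ℕ, V j =
      ∑' ℓ : ℕ, (c (ℓ + 2)) ^ 2 *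
        ∫ l : ℝ, iterConv f_G (ℓ + 2) l * ‖fhat ψ ((2 : ℝ) ^ j * l)‖ ^ 2) :
    Tendsto (fun j : ℕ => (2 : ℝ) ^ (j : ℝ) * V j) atTop
      (nhds ((∑' ℓ : ℕ, (c (ℓ + 2)) ^ 2 * B (ℓ + 2) 0) *
        ∫ l : ℝ, ‖fhat ψ l‖ ^ 2)) := by
  obtain ⟨M, hM⟩ := hCG_bdd
  have hg : Integrable fun l => ‖fhat ψ l‖ ^ 2 := by
    simpa only [hhat] using
      integrable_norm_mul_abs_rpow_sq hCψ_cont.aestronglyMeasurable hCψ_bdd hκ (by linarith)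
  have hf2 : Integrable fun x => f_G x ^ 2 :=
    integrable_sq_of_le_mul_abs_rpow (M := M) (by linarith) (by linarith [hβ.2]) hfG_int
      hfG_nonneg fun x hx => (hfG x hx).trans_le
        (mul_le_mul_of_nonneg_right (hM x) (Real.rpow_nonneg (abs_nonneg x) _))
  have hBM : ∀ n x, |B (n + 2) x| ≤ ∫ y, f_G y ^ 2 := fun n =>
    (continuous_abs.comp (hB_cont _ (by omega))).le_of_ae_le continuous_const <| by
      filter_upwards [hB (n + 2) (by omega)] with x hx
      have hle := iterConv_le hfG_int hfG_nonneg hf2 n x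
      rw [hfG_one, one_pow, one_mul] at hle
      rw [Function.comp_apply, ← hx, abs_of_nonneg (iterConv_nonneg hfG_nonneg _ x)]
      exact hle
  have hV' : ∀ j : ℕ, V j = ∑' n : ℕ, (c (n + 2)) ^ 2 *
      ∫ l : ℝ, B (n + 2) l * ‖fhat ψ ((2 : ℝ) ^ j * l)‖ ^ 2 := fun j => by
    rw [hV j]
    refine tsum_congr fun n => congrArg _ (integral_congr_ae ?_)
    filter_upwards [hB (n + 2) (by omega)] with l hl
    rw [hl]
  simp only [Real.rpow_natCast, hV']
  exact tendsto_mul_tsum_integral_mul_comp_mul hc (fun n => hB_cont _ (by omega)) hBM hg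
    (tendsto_pow_atTop_atTop_of_one_lt one_lt_two)

theorem stmt_5
    (β : ℝ) (hβ : β ∈ Set.Ioo (0 : ℝ) 1) (hβhalf : 1 / 2 < β)
    (C_G : ℝ → ℝ) (hCG_cont : Continuous C_G) (hCG_bdd : ∃ M : ℝ, ∀ x, C_G x ≤ M)
    (hCG_nonneg : ∀ x, 0 ≤ C_G x) (hCG_even : ∀ x, C_G (-x) = C_G x)
    (hCG0 : 0 < C_G 0)
    (f_G : ℝ → ℝ) (hfG_nonneg : ∀ x, 0 ≤ f_G x)
    (hfG : ∀ x : ℝ, x ≠ 0 → f_G x = C_G x * |x| ^ (β - 1))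
    (hfG_int : Integrable f_G) (hfG_one : (∫ l : ℝ, f_G l) = 1)
    (ψ : ℝ → ℝ) (hψ_int : Integrable ψ) (hψ_sq : Integrable (fun t => (ψ t) ^ 2))
    (hψ_zero : (∫ t : ℝ, ψ t) = 0)
    (α K κ : ℝ) (hα : 1 ≤ α) (hK : 0 < K) (hκ : 0 < κ)
    (Cψ : ℝ → ℂ) (hCψ_cont : Continuous Cψ)
    (hCψ0 : 0 < (Cψ 0).re ∧ (Cψ 0).im = 0)
    (hCψ_bdd : ∀ l : ℝ, ‖Cψ l‖ ≤ K * Real.exp (-κ * |l|))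
    (hhat : ∀ l : ℝ, fhat ψ l = Cψ l * ((|l| ^ α : ℝ) : ℂ))
    (c : ℕ → ℝ) (hc : Summable (fun ℓ : ℕ => (c (ℓ + 2)) ^ 2))
    (B : ℕ → ℝ → ℝ)
    (hB_cont : ∀ ℓ : ℕ, 2 ≤ ℓ → Continuous (B ℓ))
    (hB_bdd : ∀ ℓ : ℕ, 2 ≤ ℓ → ∃ M : ℝ, ∀ x, |B ℓ x| ≤ M)
    (hB : ∀ ℓ : ℕ, 2 ≤ ℓ → ∀ᵐ l : ℝ ∂volume, iterConv f_G ℓ l = B ℓ l)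
    (V : ℕ → ℝ)
    (hV : ∀ j : ℕ, V j =
      ∑' ℓ : ℕ, (c (ℓ + 2)) ^ 2 *
        ∫ l : ℝ, iterConv f_G (ℓ + 2) l * ‖fhat ψ ((2 : ℝ) ^ j * l)‖ ^ 2) :
    Tendsto (fun j : ℕ => (2 : ℝ) ^ (j : ℝ) * V j) atTop
      (nhds ((∑' ℓ : ℕ, (c (ℓ + 2)) ^ 2 * B (ℓ + 2) 0) *
        ∫ l : ℝ, ‖fhat ψ l‖ ^ 2)) :=
  stmt_5_general β hβ hβhalf C_G hCG_bdd f_G hfG_nonneg hfG hfG_int hfG_one ψ α K κ hα hκ Cψ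
    hCψ_cont hCψ_bdd hhat c hc B hB_cont hB V hV
end

section
/- Let f : ℝ → [0,∞) be even, integrable, and square-integrable. Then for every even integer ℓ ≥ 2 and every λ ∈ ℝ, f^{⋆ℓ}(λ) ≤ f^{⋆ℓ}(0); that is, the supremum of the ℓ-fold convolution f^{⋆ℓ} is attained at the origin. -/
/-!
Write `ℓ = 2m` and `g = f^{⋆m}`. Associativity gives `f^{⋆ℓ} = g ⋆ g`, and `g` is even because
`f` is. By AM-GM, `(g ⋆ g)(λ) = ∫ g(λ - y) g(y) dy ≤ ∫ g² = ∫ g(-y) g(y) dy = (g ⋆ g)(0)`.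

Working with `ℝ≥0∞`-valued lower integrals makes convolution associative with no integrability
side conditions. Square-integrability of `f` bounds `f^{⋆n}` for `n ≥ 2` by
`‖f‖₁^(n-2) ‖f‖₂²` everywhere, so the real convolutions are the `toReal` of the extended ones.
-/

open MeasureTheory Filter

open scoped ENNReal

theorem ENNReal.two_mul_mul_le_add_sq (a b : ℝ≥0∞) : 2 * a * b ≤ a ^ 2 + b ^ 2 := by
  rcases eq_or_ne a ⊤ with rfl | ha
  · simp
  rcases eq_or_ne b ⊤ with rfl | hb
  · simp
  lift a to NNReal using ha
  lift b to NNReal using hb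
  exact_mod_cast two_mul_le_add_sq a b

namespace MeasureTheory

variable {G : Type*} [MeasurableSpace G]

section Convolution

variable [AddCommGroup G] {μ : Measure G} {u v g : G → ℝ≥0∞}

theorem lconvolution_le_lintegral_mul (hu : AEMeasurable u μ) {C : ℝ≥0∞} (hv : ∀ y, v y ≤ C)
    (x : G) : (u ⋆ₗ[μ] v) x ≤ (∫⁻ y, u y ∂μ) * C :=
  calc (u ⋆ₗ[μ] v) x ≤ ∫⁻ y, u y * C ∂μ := lintegral_mono fun y => by gcongr; exact hv _
    _ = (∫⁻ y, u y ∂μ) * C := lintegral_mul_const'' _ hu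

theorem lconvolution_self_apply_zero (hg : ∀ x, g (-x) = g x) :
    (g ⋆ₗ[μ] g) 0 = ∫⁻ y, g y ^ 2 ∂μ := by
  simp [lconvolution_def, hg, sq]

variable [MeasurableNeg G] [μ.IsNegInvariant]

theorem lconvolution_apply_neg (hu : ∀ x, u (-x) = u x) (hv : ∀ x, v (-x) = v x) (x : G) :
    (u ⋆ₗ[μ] v) (-x) = (u ⋆ₗ[μ] v) x := by
  simp only [lconvolution_def]
  rw [← lintegral_neg_eq_self]
  refine lintegral_congr fun y => ?_
  rw [hu, ← hv (-y + x)]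
  congr 2
  abel

theorem lconvolution_self_le [MeasurableAdd G] [μ.IsAddLeftInvariant] (hg : AEMeasurable g μ)
    (x : G) : (g ⋆ₗ[μ] g) x ≤ ∫⁻ y, g y ^ 2 ∂μ := by
  have htranslate : ∫⁻ y, g (-y + x) ^ 2 ∂μ = ∫⁻ y, g y ^ 2 ∂μ := by
    rw [lintegral_neg_eq_self (fun y => g (y + x) ^ 2)]
    simp only [add_comm _ x]
    exact lintegral_add_left_eq_self (fun y => g y ^ 2) x
  refine (ENNReal.mul_le_mul_iff_right two_ne_zero ENNReal.ofNat_ne_top).mp ?_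
  calc 2 * (g ⋆ₗ[μ] g) x = ∫⁻ y, 2 * g y * g (-y + x) ∂μ := by
        rw [lconvolution_def, ← lintegral_const_mul' _ _ ENNReal.ofNat_ne_top]
        simp only [mul_assoc]
    _ ≤ ∫⁻ y, (g y ^ 2 + g (-y + x) ^ 2) ∂μ :=
        lintegral_mono fun y => ENNReal.two_mul_mul_le_add_sq _ _
    _ = 2 * ∫⁻ y, g y ^ 2 ∂μ := by rw [lintegral_add_left' (hg.pow_const 2), htranslate, two_mul]

end Convolution

section Iterate

variable [AddCommGroup G] (μ : Measure G) (F : G → ℝ≥0∞)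

/-- `F` is put on the left so that `(F ⋆ₗ L) x = ∫⁻ F y * L (-y + x)` matches
`conv L f x = ∫ L (x - y) * f y` factor by factor. -/
noncomputable def iterLConv : ℕ → G → ℝ≥0∞
  | 0 => 0
  | 1 => F
  | n + 2 => F ⋆ₗ[μ] iterLConv (n + 1)

variable {μ F}

theorem iterLConv_succ {n : ℕ} (hn : 1 ≤ n) :
    iterLConv μ F (n + 1) = F ⋆ₗ[μ] iterLConv μ F n := by
  obtain ⟨n, rfl⟩ := Nat.exists_eq_add_of_le' hn
  rfl

theorem iterLConv_apply_neg [MeasurableNeg G] [μ.IsNegInvariant] (hF : ∀ x, F (-x) = F x) :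
    ∀ n x, iterLConv μ F n (-x) = iterLConv μ F n x
  | 0, _ => rfl
  | 1, x => hF x
  | n + 2, x => lconvolution_apply_neg hF (iterLConv_apply_neg hF (n + 1)) x

variable [MeasurableNeg G] [μ.IsAddLeftInvariant]

theorem iterLConv_le [MeasurableAdd G] [μ.IsNegInvariant] (hF : AEMeasurable F μ) {n : ℕ}
    (hn : 2 ≤ n) (x : G) :
    iterLConv μ F n x ≤ (∫⁻ y, F y ∂μ) ^ (n - 2) * ∫⁻ y, F y ^ 2 ∂μ := by
  induction n, hn using Nat.le_induction generalizing x with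
  | base => rw [Nat.sub_self, pow_zero, one_mul]; exact lconvolution_self_le hF x
  | succ n hn ih =>
    rw [iterLConv_succ (by omega), show n + 1 - 2 = n - 2 + 1 by omega, pow_succ', mul_assoc]
    exact lconvolution_le_lintegral_mul hF ih x

theorem iterLConv_ne_top [MeasurableAdd G] [μ.IsNegInvariant] (hF : AEMeasurable F μ)
    (hF_top : ∀ x, F x ≠ ⊤) (h1 : ∫⁻ y, F y ∂μ ≠ ⊤) (h2 : ∫⁻ y, F y ^ 2 ∂μ ≠ ⊤) :
    ∀ n x, iterLConv μ F n x ≠ ⊤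
  | 0, _ => ENNReal.zero_ne_top
  | 1, x => hF_top x
  | n + 2, x => ne_top_of_le_ne_top (ENNReal.mul_ne_top (ENNReal.pow_ne_top h1) h2)
      (iterLConv_le hF (by omega) x)

variable [MeasurableAdd₂ G] [SFinite μ]

theorem aemeasurable_iterLConv (hF : AEMeasurable F μ) : ∀ n, AEMeasurable (iterLConv μ F n) μ
  | 0 => aemeasurable_const
  | 1 => hF
  | n + 2 => aemeasurable_lconvolution hF (aemeasurable_iterLConv hF (n + 1))

theorem iterLConv_add (hF : AEMeasurable F μ) {a b : ℕ} (ha : 1 ≤ a) (hb : 1 ≤ b) :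
    iterLConv μ F (a + b) = iterLConv μ F a ⋆ₗ[μ] iterLConv μ F b := by
  induction a, ha using Nat.le_induction with
  | base => rw [add_comm, iterLConv_succ hb]; rfl
  | succ a ha ih =>
    rw [add_right_comm, iterLConv_succ (by omega), ih, iterLConv_succ ha,
      lconvolution_assoc₀ hF (aemeasurable_iterLConv hF a) (aemeasurable_iterLConv hF b)]

theorem iterLConv_apply_le_apply_zero [μ.IsNegInvariant] (hF : AEMeasurable F μ)
    (hF_even : ∀ x, F (-x) = F x) {m : ℕ} (hm : 1 ≤ m) (x : G) :
    iterLConv μ F (m + m) x ≤ iterLConv μ F (m + m) 0 := by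
  rw [iterLConv_add hF hm hm, lconvolution_self_apply_zero (iterLConv_apply_neg hF_even m)]
  exact lconvolution_self_le (aemeasurable_iterLConv hF m) x

end Iterate

end MeasureTheory

open MeasureTheory

theorem iterConv_eq_toReal_iterLConv {f : ℝ → ℝ} (hf : AEMeasurable f) (hf0 : ∀ x, 0 ≤ f x)
    (hfin : ∀ n x, iterLConv volume (fun x => ENNReal.ofReal (f x)) n x ≠ ⊤) :
    ∀ n x, iterConv f n x = (iterLConv volume (fun x => ENNReal.ofReal (f x)) n x).toReal
  | 0, _ => rfl
  | 1, x => (ENNReal.toReal_ofReal (hf0 x)).symm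
  | n + 2, x => by
    set L := iterLConv volume (fun x => ENNReal.ofReal (f x)) (n + 1)
    have hL : AEMeasurable (fun y => L (x - y)) :=
      (aemeasurable_iterLConv hf.ennreal_ofReal (n + 1)).comp_quasiMeasurePreserving
        (Measure.measurePreserving_sub_left volume x).quasiMeasurePreserving
    calc iterConv f (n + 2) x = ∫ y, (L (x - y)).toReal * f y := by
          rw [iterConv, conv, funext (iterConv_eq_toReal_iterLConv hf hf0 hfin (n + 1))]
      _ = (∫⁻ y, ENNReal.ofReal ((L (x - y)).toReal * f y)).toReal :=
          integral_eq_lintegral_of_nonneg_ae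
            (ae_of_all _ fun y => mul_nonneg ENNReal.toReal_nonneg (hf0 y))
            (hL.ennreal_toReal.mul hf).aestronglyMeasurable
      _ = (iterLConv volume (fun x => ENNReal.ofReal (f x)) (n + 2) x).toReal := by
          congr 1
          refine lintegral_congr fun y => ?_
          rw [ENNReal.ofReal_mul ENNReal.toReal_nonneg, ENNReal.ofReal_toReal (hfin _ _), mul_comm,
            sub_eq_neg_add]

theorem stmt_6
    (f : ℝ → ℝ) (hf_nonneg : ∀ x, 0 ≤ f x) (hf_even : ∀ x, f (-x) = f x)
    (hf_int : Integrable f) (hf_sq : Integrable (fun x => (f x) ^ 2)) :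
    ∀ ℓ : ℕ, 2 ≤ ℓ → Even ℓ → ∀ l : ℝ, iterConv f ℓ l ≤ iterConv f ℓ 0 := by
  rintro ℓ hℓ ⟨m, rfl⟩ l
  set F : ℝ → ℝ≥0∞ := fun x => ENNReal.ofReal (f x)
  have hF : AEMeasurable F := hf_int.aemeasurable.ennreal_ofReal
  have hF_sq : ∫⁻ x, F x ^ 2 ≠ ⊤ := by
    simpa only [F, ENNReal.ofReal_pow (hf_nonneg _)] using hf_sq.lintegral_lt_top.ne
  have hfin := iterLConv_ne_top hF (fun x => ENNReal.ofReal_ne_top) hf_int.lintegral_lt_top.ne hF_sq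
  rw [iterConv_eq_toReal_iterLConv hf_int.aemeasurable hf_nonneg hfin,
    iterConv_eq_toReal_iterLConv hf_int.aemeasurable hf_nonneg hfin]
  exact ENNReal.toReal_mono (hfin _ _)
    (iterLConv_apply_le_apply_zero hF (fun x => by simp only [F, hf_even]) (by omega) l)
end

section
/- The double integral ∫_ℝ ∫_ℝ |ψ̂(ω₂)|² |ψ̂(ω₃)|² · |ω₂−ω₃|^{β−1} · |ω₃|^{β−1} · |ω₂|^{β−1} dω₃ dω₂ is finite. -/
open MeasureTheory Filter

/-! Put `F(λ) = |ψ̂(λ)|² |λ|^(β-1)`. Since `|ψ̂(λ)| ≤ K e^{-κ|λ|} |λ|^α` and `2α + β - 1 > 0`,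
polynomial-versus-exponential growth gives `F(λ) ≤ M e^{-κ|λ|}`, so `F` is integrable and bounded.
The integrand is `F(ω₂) F(ω₃) |ω₂ - ω₃|^(β-1)`. Split `|u|^(β-1) ≤ k(u) + 1`, where `k` is
`|u|^(β-1)` cut off to `|u| < 1` and is integrable because `β - 1 > -1`. The `k`-part is at most
`sup F` times the convolution integrand `F(ω₃) k(ω₂ - ω₃)`, and the remaining part is the product
`F(ω₂) F(ω₃)`; both are integrable on the plane. -/

open Set Real Metric

/-- `x ≤ eˣ` at `x = b t / c`, raised to the power `c`. -/
lemma rpow_le_div_rpow_mul_exp {b c t : ℝ} (hb : 0 < b) (hc : 0 < c) (ht : 0 ≤ t) :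
    t ^ c ≤ (c / b) ^ c * exp (b * t) := by
  have hbt : 0 ≤ b * t / c := by positivity
  calc t ^ c = (c / b * (b * t / c)) ^ c := by congr 1; field_simp
    _ = (c / b) ^ c * (b * t / c) ^ c := mul_rpow (by positivity) hbt
    _ ≤ (c / b) ^ c * exp (b * t / c) ^ c := by
        gcongr; linarith [add_one_le_exp (b * t / c)]
    _ = (c / b) ^ c * exp (b * t) := by rw [← exp_mul, div_mul_cancel₀ _ hc.ne']

lemma integrable_of_even_of_integrableOn_Ioi {E : Type*} [NormedAddCommGroup E] {f : ℝ → E}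
    (hf : ∀ x, f (-x) = f x) (h : IntegrableOn f (Ioi 0)) : Integrable f := by
  have hIio : IntegrableOn f (Iio 0) := by
    rw [← (Measure.measurePreserving_neg (volume : Measure ℝ)).integrableOn_comp_preimage
      (Homeomorph.neg ℝ).measurableEmbedding]
    simpa only [Function.comp_def, hf, neg_preimage, neg_Iio, neg_zero] using h
  rw [← integrableOn_univ, ← Iic_union_Ioi (a := 0)]
  exact ((integrableOn_Iic_iff_integrableOn_Iio).mpr hIio).union h

lemma integrable_exp_neg_mul_abs {b : ℝ} (hb : 0 < b) :
    Integrable fun x : ℝ => exp (-b * |x|) := by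
  refine integrable_of_even_of_integrableOn_Ioi (by simp) ?_
  exact (exp_neg_integrableOn_Ioi 0 hb).congr_fun
    (fun x hx => by simp [abs_of_pos (mem_Ioi.mp hx)]) measurableSet_Ioi

lemma integrableOn_ball_abs_rpow {s : ℝ} (hs : -1 < s) (r : ℝ) :
    IntegrableOn (fun u : ℝ => |u| ^ s) (ball 0 r) := by
  refine integrableOn_ball_of_norm_le_rpow (C := 1) (α := -s) (by simp) (by simp; linarith)
    (Eventually.of_forall fun u => ?_)
    (by fun_prop : Measurable fun u : ℝ => |u| ^ s).aestronglyMeasurable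
  simp [abs_rpow_of_nonneg (abs_nonneg u)]

lemma abs_rpow_le_indicator_add_one {s : ℝ} (hs : s ≤ 0) (u : ℝ) :
    |u| ^ s ≤ (ball (0 : ℝ) 1).indicator (fun u => |u| ^ s) u + 1 := by
  by_cases hu : u ∈ ball (0 : ℝ) 1
  · simp [indicator_of_mem hu]
  · rw [indicator_of_notMem hu, zero_add]
    exact rpow_le_one_of_one_le_of_nonpos (by simpa using hu) hs

lemma integrable_mul_mul_comp_sub_of_bounded {G : Type*} [MeasurableSpace G] [AddGroup G]
    [MeasurableAdd₂ G] [MeasurableNeg G] {μ : Measure G} [SFinite μ] [μ.IsAddRightInvariant]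
    {f g h : G → ℝ} {C : ℝ} (hf : AEStronglyMeasurable f μ) (hfC : ∀ x, |f x| ≤ C)
    (hg : Integrable g μ) (hh : Integrable h μ) :
    Integrable (fun p : G × G => f p.1 * g p.2 * h (p.1 - p.2)) (μ.prod μ) := by
  have hconv := hg.convolution_integrand (ContinuousLinearMap.mul ℝ ℝ) hh
  refine (hconv.bdd_mul hf.comp_fst (Eventually.of_forall fun p => hfC p.1)).congr ?_
  exact Eventually.of_forall fun p => by simp [mul_assoc]

lemma integrable_mul_mul_abs_sub_rpow {f g : ℝ → ℝ} {C s : ℝ} (hs : s ∈ Ioc (-1) 0)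
    (hf : Integrable f) (hfC : ∀ x, |f x| ≤ C) (hg : Integrable g) :
    Integrable (fun p : ℝ × ℝ => f p.1 * g p.2 * |p.1 - p.2| ^ s) := by
  set k := (ball (0 : ℝ) 1).indicator fun u => |u| ^ s
  have hk : Integrable k := (integrable_indicator_iff measurableSet_ball).mpr
    (integrableOn_ball_abs_rpow hs.1 1)
  rw [Measure.volume_eq_prod]
  have hmajor := (integrable_mul_mul_comp_sub_of_bounded hf.abs.aestronglyMeasurable (C := C)
    (by simpa using hfC) hg.abs hk).add (hf.abs.mul_prod hg.abs)
  refine hmajor.mono' ((hf.1.comp_fst.mul hg.1.comp_snd).mul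
    (by fun_prop : Measurable fun p : ℝ × ℝ => |p.1 - p.2| ^ s).aestronglyMeasurable) ?_
  refine Eventually.of_forall fun p => ?_
  simp only [Pi.add_apply, norm_mul, norm_eq_abs, abs_abs, abs_rpow_of_nonneg (abs_nonneg _)]
  rw [← mul_add_one]
  gcongr
  exact abs_rpow_le_indicator_add_one hs.2 _

lemma sq_mul_abs_rpow_le_mul_exp {x y a s K κ : ℝ} (hκ : 0 < κ) (hc : 0 < 2 * a + s)
    (hy0 : 0 ≤ y) (hy : y ≤ K * exp (-κ * |x|) * |x| ^ a) :
    y ^ 2 * |x| ^ s ≤ K ^ 2 * ((2 * a + s) / κ) ^ (2 * a + s) * exp (-κ * |x|) := by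
  have hpow : (|x| ^ a) ^ 2 * |x| ^ s = |x| ^ (2 * a + s) := by
    rw [rpow_add' (abs_nonneg x) hc.ne', ← rpow_natCast, ← rpow_mul (abs_nonneg x)]
    ring_nf
  calc y ^ 2 * |x| ^ s ≤ (K * exp (-κ * |x|) * |x| ^ a) ^ 2 * |x| ^ s := by gcongr
    _ = K ^ 2 * |x| ^ (2 * a + s) * exp (-(2 * κ) * |x|) := by
        rw [← hpow, mul_pow, mul_pow, ← exp_nat_mul]; push_cast; ring_nf
    _ ≤ K ^ 2 * (((2 * a + s) / κ) ^ (2 * a + s) * exp (κ * |x|)) * exp (-(2 * κ) * |x|) := by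
        gcongr; exact rpow_le_div_rpow_mul_exp hκ hc (abs_nonneg x)
    _ = K ^ 2 * ((2 * a + s) / κ) ^ (2 * a + s) * exp (-κ * |x|) := by
        rw [mul_assoc _ _ (exp _), mul_assoc _ (exp _), ← exp_add]; ring_nf

theorem stmt_12_general
    (β : ℝ) (hβ : β ∈ Set.Ioo (0 : ℝ) 1)
    (ψ : ℝ → ℝ)
    (α K κ : ℝ) (hα : 1 ≤ α) (hκ : 0 < κ)
    (Cψ : ℝ → ℂ) (hCψ_cont : Continuous Cψ)
    (hCψ_bdd : ∀ l : ℝ, ‖Cψ l‖ ≤ K * Real.exp (-κ * |l|))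
    (hhat : ∀ l : ℝ, fhat ψ l = Cψ l * ((|l| ^ α : ℝ) : ℂ)) :
    Integrable (fun p : ℝ × ℝ =>
      ‖fhat ψ p.1‖ ^ 2 * ‖fhat ψ p.2‖ ^ 2 *
        |p.1 - p.2| ^ (β - 1) * |p.2| ^ (β - 1) * |p.1| ^ (β - 1))
      (volume : Measure (ℝ × ℝ)) := by
  obtain ⟨hβ0, hβ1⟩ := hβ
  have hfhat_cont : Continuous (fhat ψ) := by
    rw [funext hhat]
    exact hCψ_cont.mul (Complex.continuous_ofReal.comp
      (continuous_abs.rpow_const fun _ => Or.inr (by linarith)))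
  have hfhat_le (l : ℝ) : ‖fhat ψ l‖ ≤ K * exp (-κ * |l|) * |l| ^ α := by
    rw [hhat, norm_mul, Complex.norm_real, norm_eq_abs, abs_rpow_of_nonneg (abs_nonneg l),
      abs_abs]
    gcongr
    exact hCψ_bdd l
  set F : ℝ → ℝ := fun l => ‖fhat ψ l‖ ^ 2 * |l| ^ (β - 1)
  set M := K ^ 2 * ((2 * α + (β - 1)) / κ) ^ (2 * α + (β - 1))
  have hc : 0 < 2 * α + (β - 1) := by linarith
  have hM : 0 ≤ M := mul_nonneg (sq_nonneg K) (rpow_nonneg (div_pos hc hκ).le _)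
  have hF_le (l : ℝ) : |F l| ≤ M * exp (-κ * |l|) := by
    rw [abs_of_nonneg (by positivity)]
    exact sq_mul_abs_rpow_le_mul_exp hκ hc (norm_nonneg _) (hfhat_le l)
  have hF_bdd (l : ℝ) : |F l| ≤ M :=
    (hF_le l).trans (mul_le_of_le_one_right hM (exp_le_one_iff.mpr (by nlinarith [abs_nonneg l])))
  have hF_meas : Measurable F := (hfhat_cont.norm.pow 2).measurable.mul (by fun_prop)
  have hF_int : Integrable F := ((integrable_exp_neg_mul_abs hκ).const_mul M).mono'
    hF_meas.aestronglyMeasurable (Eventually.of_forall fun l => (norm_eq_abs _).trans_le (hF_le l))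
  refine (integrable_mul_mul_abs_sub_rpow (s := β - 1) ⟨by linarith, by linarith⟩
    hF_int hF_bdd hF_int).congr ?_
  exact Eventually.of_forall fun p => by simp only [F]; ac_rfl

theorem stmt_12
    (β : ℝ) (hβ : β ∈ Set.Ioo (0 : ℝ) 1)
    (ψ : ℝ → ℝ) (hψ_int : Integrable ψ) (hψ_sq : Integrable (fun t => (ψ t) ^ 2))
    (hψ_zero : (∫ t : ℝ, ψ t) = 0)
    (α K κ : ℝ) (hα : 1 ≤ α) (hK : 0 < K) (hκ : 0 < κ)
    (Cψ : ℝ → ℂ) (hCψ_cont : Continuous Cψ)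
    (hCψ0 : 0 < (Cψ 0).re ∧ (Cψ 0).im = 0)
    (hCψ_bdd : ∀ l : ℝ, ‖Cψ l‖ ≤ K * Real.exp (-κ * |l|))
    (hhat : ∀ l : ℝ, fhat ψ l = Cψ l * ((|l| ^ α : ℝ) : ℂ)) :
    Integrable (fun p : ℝ × ℝ =>
      ‖fhat ψ p.1‖ ^ 2 * ‖fhat ψ p.2‖ ^ 2 *
        |p.1 - p.2| ^ (β - 1) * |p.2| ^ (β - 1) * |p.1| ^ (β - 1))
      (volume : Measure (ℝ × ℝ)) :=
  stmt_12_general β hβ ψ α K κ hα hκ Cψ hCψ_cont hCψ_bdd hhat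
end

section
/- Let (Ω, ℱ, P) be a probability space, let σ > 0, let S : Ω → ℝ be a random variable whose law is the centered Gaussian measure on ℝ with variance σ², and let T : Ω → ℝ be a random variable with E[T²] < ∞. Then for every a > 0, P(|S| < |T|) ≤ a^{−2} E[T²] + 2 ∫₀^{a/σ} (2π)^{−1/2} e^{−r²/2} dr. -/
open MeasureTheory Filter ProbabilityTheory

theorem stmt_15
    {Ω : Type*} [MeasurableSpace Ω] (P : Measure Ω) [IsProbabilityMeasure P]
    (σ : ℝ) (hσ : 0 < σ)
    (S T : Ω → ℝ) (hS_meas : Measurable S) (hT_meas : Measurable T)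
    (hlaw : Measure.map S P = gaussianReal 0 ⟨σ ^ 2, sq_nonneg σ⟩)
    (hT2 : Integrable (fun ω => (T ω) ^ 2) P)
    (a : ℝ) (ha : 0 < a) :
    (P {ω | |S ω| < |T ω|}).toReal ≤
      (a ^ 2)⁻¹ * (∫ ω, (T ω) ^ 2 ∂P) +
        2 * ∫ r in (0 : ℝ)..(a / σ),
          (2 * Real.pi) ^ (-(1 : ℝ) / 2) * Real.exp (-(r ^ 2) / 2) := by
  set v : NNReal := ⟨σ ^ 2, sq_nonneg σ⟩ with hv
  have hvR : (v : ℝ) = σ ^ 2 := rfl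
  have hvne : v ≠ 0 := by
    intro h
    have : (v : ℝ) = 0 := by rw [h]; simp
    rw [hvR] at this
    exact (pow_pos hσ 2).ne' this
  set pdf : ℝ → ℝ := gaussianPDFReal 0 v with hpdf
  -- subset
  have hsub : {ω | |S ω| < |T ω|} ⊆ {ω | a ≤ |T ω|} ∪ {ω | |S ω| < a} := by
    intro ω hω
    by_cases h : a ≤ |T ω|
    · exact Or.inl h
    · exact Or.inr (lt_of_lt_of_le hω (le_of_not_ge h))
  have hle : P {ω | |S ω| < |T ω|} ≤ P {ω | a ≤ |T ω|} + P {ω | |S ω| < a} :=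
    le_trans (measure_mono hsub) (measure_union_le _ _)
  have htR : (P {ω | |S ω| < |T ω|}).toReal ≤
      (P {ω | a ≤ |T ω|}).toReal + (P {ω | |S ω| < a}).toReal := by
    rw [← ENNReal.toReal_add (measure_ne_top _ _) (measure_ne_top _ _)]
    exact ENNReal.toReal_mono (by finiteness) hle
  -- Markov
  have hset : {ω | a ≤ |T ω|} = {ω | a ^ 2 ≤ T ω ^ 2} := by
    ext ω
    simp only [Set.mem_setOf_eq]
    constructor <;> intro h <;> nlinarith [abs_nonneg (T ω), sq_abs (T ω)]
  have markov := mul_meas_ge_le_integral_of_nonneg (μ := P) (f := fun ω => T ω ^ 2)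
    (ae_of_all _ fun ω => sq_nonneg _) hT2 (a ^ 2)
  have hA : (P {ω | a ≤ |T ω|}).toReal ≤ (a ^ 2)⁻¹ * ∫ ω, T ω ^ 2 ∂P := by
    rw [hset, inv_mul_eq_div, le_div_iff₀ (by positivity)]
    calc (P {ω | a ^ 2 ≤ T ω ^ 2}).toReal * a ^ 2
        = a ^ 2 * (P {ω | a ^ 2 ≤ T ω ^ 2}).toReal := by ring
      _ ≤ ∫ ω, T ω ^ 2 ∂P := markov
  -- Gaussian part
  have hB : (P {ω | |S ω| < a}).toReal = ∫ x in Set.Ioo (-a) a, pdf x := by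
    have hpre : {ω | |S ω| < a} = S ⁻¹' (Set.Ioo (-a) a) := by
      ext ω; simp [abs_lt, Set.mem_Ioo]
    rw [hpre, ← Measure.map_apply hS_meas measurableSet_Ioo, hlaw,
      gaussianReal_apply_eq_integral _ hvne,
      ENNReal.toReal_ofReal (setIntegral_nonneg measurableSet_Ioo
        fun x _ => gaussianPDFReal_nonneg _ _ _)]
  have hint : ∀ b c : ℝ, IntervalIntegrable pdf volume b c := fun b c =>
    (integrable_gaussianPDFReal 0 v).intervalIntegrable
  have heven : ∀ x, pdf (-x) = pdf x := by
    intro x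
    simp [hpdf, gaussianPDFReal]
  have hIoo_int : ∫ x in Set.Ioo (-a) a, pdf x = ∫ x in (-a)..a, pdf x := by
    rw [intervalIntegral.integral_of_le (by linarith), integral_Ioc_eq_integral_Ioo]
  have hneg : ∫ x in (-a)..(0:ℝ), pdf x = ∫ x in (0:ℝ)..a, pdf x := by
    have h2 := intervalIntegral.integral_comp_neg (a := (0:ℝ)) (b := a) pdf
    simp only [heven, neg_zero] at h2
    exact h2.symm
  have hsplit : ∫ x in (-a)..a, pdf x = 2 * ∫ x in (0:ℝ)..a, pdf x := by
    rw [← intervalIntegral.integral_add_adjacent_intervals (hint (-a) 0) (hint 0 a), hneg]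
    ring
  have hsqrt : Real.sqrt (2 * Real.pi * (σ ^ 2)) = Real.sqrt (2 * Real.pi) * σ := by
    rw [Real.sqrt_mul (by positivity), Real.sqrt_sq hσ.le]
  have hrpow : (2 * Real.pi) ^ (-(1 : ℝ) / 2) = (Real.sqrt (2 * Real.pi))⁻¹ := by
    rw [neg_div, Real.rpow_neg (by positivity), Real.sqrt_eq_rpow]
  have key : ∀ r : ℝ, (2 * Real.pi) ^ (-(1 : ℝ) / 2) * Real.exp (-(r ^ 2) / 2)
      = σ * pdf (σ * r) := by
    intro r
    rw [hpdf, gaussianPDFReal, hvR, hsqrt, hrpow]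
    have hexp : -(σ * r - 0) ^ 2 / (2 * σ ^ 2) = -(r ^ 2) / 2 := by
      field_simp
      ring
    rw [hexp]
    field_simp
  have hsubst : ∫ r in (0:ℝ)..(a / σ), (2 * Real.pi) ^ (-(1 : ℝ) / 2) * Real.exp (-(r ^ 2) / 2)
      = ∫ x in (0:ℝ)..a, pdf x := by
    simp_rw [key]
    rw [intervalIntegral.integral_const_mul, intervalIntegral.integral_comp_mul_left pdf hσ.ne',
      mul_zero, mul_div_cancel₀ _ hσ.ne', smul_eq_mul, ← mul_assoc,
      mul_inv_cancel₀ hσ.ne', one_mul]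
  have hBval : (P {ω | |S ω| < a}).toReal
      = 2 * ∫ r in (0:ℝ)..(a / σ), (2 * Real.pi) ^ (-(1 : ℝ) / 2) * Real.exp (-(r ^ 2) / 2) := by
    rw [hB, hIoo_int, hsplit, hsubst]
  linarith [htR, hA, hBval.le]
end

section
/- As j → ∞, | ∫_ℝ ∫_ℝ ∫_ℝ |ψ̂(2^{j₂(j)}(λ₁+λ₂−λ₃))|² · ψ̂(2^j(λ₁+λ₂)) · ψ̂(2^j(λ₃−λ₁)) · f_G(λ₁) · f_{c,j}(λ₂) · f_{c,j}(λ₃) dλ₁ dλ₂ dλ₃ | = O(2^{j(1−2β)} · 2^{−j₂(j)}). -/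
/-!
Write `p = 2^j`, `q = 2^{j₂(j)}` and `s = σ_j⁻¹`. The factor `|x|^α e^{-κ|x|}` in `ψ̂` gives both
`|ψ̂(x)| ≤ B e^{-κ|x|/2}` and `|ψ̂(x)| ≤ A |x|^{1-β}`, while `f_G(x) ≤ M |x|^{β-1}`. The triple
integral is estimated from the inside out. In the `λ₃`-integral, `f_G(λ₃)|ψ̂(pλ₃)| ≤ M A p^{1-β}`
and `|ψ̂(q·)|²` integrates to `O(q⁻¹)`. In the `λ₂`-integral, `|ψ̂(p(λ₁+λ₂))ψ̂(pλ₂)|` decays like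
`e^{-κp(|λ₁|+|λ₂|)/4}`, so the `λ₂`- and the `λ₁`-integral of `|λ|^{β-1} e^{-κp|λ|/4}` each
contribute `O(p^{-β})`, and the integral is `O(s² p^{1-3β} q⁻¹)`. Finally `σ_j² ≥ c p^{-β}`, since
`C_G` and `C_ψ̂` are continuous and nonzero at `0`, so that `f_G ≳ (δ/p)^{β-1}` and
`|ψ̂(p·)| ≳ 1` on `[δ/2p, δ/p]`; hence `s² p^{1-3β} ≤ c⁻¹ p^{1-2β}`.
-/

open MeasureTheory Filter

open Real Set Topology

lemma exists_abs_rpow_mul_exp_le {r c : ℝ} (hr : 0 ≤ r) (hc : 0 < c) :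
    ∃ S, ∀ x : ℝ, |x| ^ r * exp (-c * |x|) ≤ S := by
  set f : ℝ → ℝ := fun x => |x| ^ r * exp (-c * |x|)
  have hf : Continuous f := (continuous_abs.rpow_const fun _ => Or.inr hr).mul (by fun_prop)
  have hlim : Tendsto f (cocompact ℝ) (𝓝 0) := by
    rw [cocompact_eq_atBot_atTop]
    exact (tendsto_rpow_mul_exp_neg_mul_atTop_nhds_zero r c hc).comp
      (tendsto_abs_atBot_atTop.sup tendsto_abs_atTop_atTop)
  obtain ⟨x, hx⟩ := hf.exists_forall_ge' 1 (hlim.eventually (ge_mem_nhds (by positivity)))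
  exact ⟨f x, hx⟩

lemma integral_abs_rpow_mul_exp_neg_mul_abs {a c : ℝ} (ha : 0 < a) (hc : 0 < c) :
    ∫ x : ℝ, |x| ^ (a - 1) * exp (-c * |x|) = 2 * (1 / c) ^ a * Gamma a := by
  simp_rw [neg_mul]
  rw [integral_comp_abs (f := fun t => t ^ (a - 1) * exp (-(c * t))),
    integral_rpow_mul_exp_neg_mul_Ioi ha hc, mul_assoc]

lemma integrable_abs_rpow_mul_exp_neg_mul_abs_s18 {a c : ℝ} (ha : 0 < a) (hc : 0 < c) :
    Integrable fun x : ℝ => |x| ^ (a - 1) * exp (-c * |x|) :=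
  .of_integral_ne_zero <| by
    rw [integral_abs_rpow_mul_exp_neg_mul_abs ha hc]
    have := Gamma_pos_of_pos ha
    positivity

lemma exp_neg_mul_abs_mul {c p : ℝ} (hp : 0 < p) (x : ℝ) :
    exp (-c * |p * x|) = exp (-(c * p) * |x|) := by
  rw [abs_mul, abs_of_pos hp, neg_mul, neg_mul, mul_assoc]

lemma integral_abs_rpow_mul_exp_neg_mul_abs_mul {a c p : ℝ} (ha : 0 < a) (hc : 0 < c)
    (hp : 0 < p) :
    ∫ x : ℝ, |x| ^ (a - 1) * exp (-c * |p * x|) = 2 * (1 / c) ^ a * Gamma a * p ^ (-a) := by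
  simp_rw [exp_neg_mul_abs_mul hp]
  rw [integral_abs_rpow_mul_exp_neg_mul_abs ha (mul_pos hc hp), ← one_div_mul_one_div,
    mul_rpow (by positivity) (by positivity), one_div p, inv_rpow hp.le, ← rpow_neg hp.le]
  ring

lemma integrable_abs_rpow_mul_exp_neg_mul_abs_mul {a c p : ℝ} (ha : 0 < a) (hc : 0 < c)
    (hp : 0 < p) :
    Integrable fun x : ℝ => |x| ^ (a - 1) * exp (-c * |p * x|) := by
  simp_rw [exp_neg_mul_abs_mul hp]
  exact integrable_abs_rpow_mul_exp_neg_mul_abs_s18 ha (mul_pos hc hp)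

lemma integral_exp_neg_mul_abs_mul_sub {c q : ℝ} (hc : 0 < c) (hq : 0 < q) (L : ℝ) :
    ∫ x : ℝ, exp (-c * |q * (L - x)|) = 2 / c * q⁻¹ := by
  rw [integral_sub_left_eq_self (fun x => exp (-c * |q * x|))]
  simpa [rpow_neg_one, div_eq_mul_inv] using
    integral_abs_rpow_mul_exp_neg_mul_abs_mul one_pos hc hq

lemma integrable_exp_neg_mul_abs_mul_sub {c q : ℝ} (hc : 0 < c) (hq : 0 < q) (L : ℝ) :
    Integrable fun x : ℝ => exp (-c * |q * (L - x)|) := by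
  simpa using (integrable_abs_rpow_mul_exp_neg_mul_abs_mul one_pos hc hq).comp_sub_left L

section Decay

variable {E : Type*} [NormedAddCommGroup E] {F : ℝ → E} {K κ α : ℝ}

lemma exists_norm_le_mul_exp_of_norm_le (hK : 0 ≤ K) (hα : 0 ≤ α) (hκ : 0 < κ)
    (hF : ∀ x, ‖F x‖ ≤ K * |x| ^ α * exp (-κ * |x|)) :
    ∃ B, ∀ x, ‖F x‖ ≤ B * exp (-(κ / 2) * |x|) := by
  obtain ⟨S, hS⟩ := exists_abs_rpow_mul_exp_le hα (half_pos hκ)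
  refine ⟨K * S, fun x => ?_⟩
  calc ‖F x‖ ≤ K * |x| ^ α * exp (-κ * |x|) := hF x
    _ = K * (|x| ^ α * exp (-(κ / 2) * |x|)) * exp (-(κ / 2) * |x|) := by
      rw [mul_assoc K, mul_assoc K, mul_assoc, ← exp_add]
      ring_nf
    _ ≤ K * S * exp (-(κ / 2) * |x|) := by gcongr; exact hS x

lemma exists_norm_le_mul_abs_rpow_of_norm_le {r : ℝ} (hK : 0 ≤ K) (hr : 0 < r) (hrα : r ≤ α)
    (hκ : 0 < κ) (hF : ∀ x, ‖F x‖ ≤ K * |x| ^ α * exp (-κ * |x|)) :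
    ∃ A, ∀ x, ‖F x‖ ≤ A * |x| ^ r := by
  obtain ⟨S, hS⟩ := exists_abs_rpow_mul_exp_le (sub_nonneg.2 hrα) hκ
  refine ⟨K * S, fun x => ?_⟩
  calc ‖F x‖ ≤ K * |x| ^ α * exp (-κ * |x|) := hF x
    _ = K * (|x| ^ (α - r) * exp (-κ * |x|)) * |x| ^ r := by
      nth_rw 1 [← sub_add_cancel α r]
      rw [rpow_add' (abs_nonneg x) (by linarith)]
      ring
    _ ≤ K * S * |x| ^ r := by gcongr; exact hS x

lemma norm_le_of_norm_le_mul_exp {c B : ℝ} (hc : 0 ≤ c) (hF : ∀ x, ‖F x‖ ≤ B * exp (-c * |x|))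
    (x : ℝ) : ‖F x‖ ≤ B := by
  have hB : 0 ≤ B := by simpa using (norm_nonneg _).trans (hF 0)
  refine (hF x).trans (mul_le_of_le_one_right hB (exp_le_one_iff.2 ?_))
  nlinarith [abs_nonneg x]

end Decay

lemma eventually_half_mul_rpow_le {h u : ℝ → ℝ} {r : ℝ} (hh : ContinuousAt h 0) (h0 : 0 < h 0)
    (hu : ∀ x > 0, h x * x ^ r ≤ u x) : ∀ᶠ x in 𝓝[>] 0, h 0 / 2 * x ^ r ≤ u x := by
  filter_upwards [nhdsWithin_le_nhds (hh.eventually (lt_mem_nhds (half_lt_self h0))),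
    self_mem_nhdsWithin] with x hhx (hx : 0 < x)
  exact (mul_le_mul_of_nonneg_right hhx.le (by positivity)).trans (hu x hx)

lemma exists_mul_rpow_neg_le_integral {E : Type*} [NormedAddCommGroup E] {f : ℝ → ℝ} {F : ℝ → E}
    {α β a b B : ℝ} (hα : 0 ≤ α) (hβ : β ≤ 1) (ha : 0 < a) (hb : 0 < b)
    (hf0 : ∀ x, 0 ≤ f x) (hf : Integrable f) (hFc : Continuous F) (hFB : ∀ x, ‖F x‖ ≤ B)
    (hfa : ∀ᶠ x in 𝓝[>] 0, a * x ^ (β - 1) ≤ f x) (hFb : ∀ᶠ x in 𝓝[>] 0, b * x ^ α ≤ ‖F x‖) :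
    ∃ c > 0, ∀ p ≥ 1, c * p ^ (-β) ≤ ∫ l, f l * ‖F (p * l)‖ ^ 2 := by
  obtain ⟨δ, hδ : 0 < δ, hδ_sub⟩ := mem_nhdsGT_iff_exists_Ioc_subset.1 (hfa.and hFb)
  refine ⟨a * δ ^ (β - 1) * (b * (δ / 2) ^ α) ^ 2 * (δ / 2), by positivity, fun p hp => ?_⟩
  have hp0 : 0 < p := one_pos.trans_le hp
  have hint : Integrable fun l => f l * ‖F (p * l)‖ ^ 2 := by
    refine hf.mul_bdd (c := B ^ 2) ?_ (ae_of_all _ fun l => ?_)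
    · exact ((hFc.comp (continuous_const_mul p)).norm.pow 2).aestronglyMeasurable
    · simpa using pow_le_pow_left₀ (norm_nonneg _) (hFB (p * l)) 2
  have hlower : ∀ l ∈ Icc (δ / 2 / p) (δ / p),
      a * (δ / p) ^ (β - 1) * (b * (δ / 2) ^ α) ^ 2 ≤ f l * ‖F (p * l)‖ ^ 2 := by
    rintro l ⟨hl₁, hl₂⟩
    have hl : 0 < l := lt_of_lt_of_le (by positivity) hl₁
    have hpl₁ : δ / 2 ≤ p * l := by rwa [div_le_iff₀' hp0] at hl₁
    have hpl₂ : p * l ≤ δ := by rwa [le_div_iff₀' hp0] at hl₂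
    have hlδ : l ≤ δ := hl₂.trans (div_le_self hδ.le hp)
    have hfl := (hδ_sub ⟨hl, hlδ⟩).1
    have hFl := (hδ_sub ⟨mul_pos hp0 hl, hpl₂⟩).2
    refine mul_le_mul ?_ (pow_le_pow_left₀ (by positivity) ?_ 2) (by positivity) (hf0 l)
    · exact (mul_le_mul_of_nonneg_left (rpow_le_rpow_of_nonpos hl hl₂ (by linarith))
        ha.le).trans hfl
    · exact (mul_le_mul_of_nonneg_left (rpow_le_rpow (by positivity) hpl₁ hα) hb.le).trans hFl
  calc a * δ ^ (β - 1) * (b * (δ / 2) ^ α) ^ 2 * (δ / 2) * p ^ (-β)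
      = a * (δ / p) ^ (β - 1) * (b * (δ / 2) ^ α) ^ 2 * volume.real (Icc (δ / 2 / p) (δ / p)) := by
        rw [Real.volume_real_Icc_of_le (by gcongr; linarith), div_rpow hδ.le hp0.le,
          rpow_neg hp0.le, rpow_sub_one hp0.ne']
        field_simp
        ring
    _ ≤ ∫ l in Icc (δ / 2 / p) (δ / p), f l * ‖F (p * l)‖ ^ 2 :=
        setIntegral_ge_of_const_le_real measurableSet_Icc measure_Icc_lt_top.ne hlower
          hint.integrableOn
    _ ≤ ∫ l, f l * ‖F (p * l)‖ ^ 2 :=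
        setIntegral_le_integral hint (ae_of_all _ fun l => by have := hf0 l; positivity)

lemma exp_neg_mul_abs_add_mul_exp_le {c : ℝ} (hc : 0 ≤ c) (x y : ℝ) :
    exp (-c * |x + y|) * exp (-c * |y|) ≤ exp (-(c / 2) * |x|) * exp (-(c / 2) * |y|) := by
  rw [← exp_add, ← exp_add, exp_le_exp]
  have h : |x| ≤ |x + y| + |y| := by simpa using abs_sub (x + y) y
  nlinarith [mul_le_mul_of_nonneg_left h hc, mul_nonneg hc (abs_nonneg (x + y))]

lemma norm_integral_le_of_norm_le_abs_rpow_mul_exp {f : ℝ → ℂ} {a c p C : ℝ} (ha : 0 < a)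
    (hc : 0 < c) (hp : 0 < p) (hf : ∀ x ≠ 0, ‖f x‖ ≤ C * (|x| ^ (a - 1) * exp (-c * |p * x|))) :
    ‖∫ x, f x‖ ≤ C * (2 * (1 / c) ^ a * Gamma a * p ^ (-a)) := by
  refine (norm_integral_le_of_norm_le
    ((integrable_abs_rpow_mul_exp_neg_mul_abs_mul ha hc hp).const_mul C) ?_).trans_eq ?_
  · filter_upwards [volume.ae_ne 0] with x hx using hf x hx
  · rw [integral_const_mul, integral_abs_rpow_mul_exp_neg_mul_abs_mul ha hc hp]

section TripleIntegral

variable {F w : ℝ → ℂ} {g : ℝ → ℝ} {β c B A M p q s : ℝ}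

lemma mul_norm_comp_mul_le (hFA : ∀ x, ‖F x‖ ≤ A * |x| ^ (1 - β))
    (hg : ∀ x ≠ 0, g x ≤ M * |x| ^ (β - 1)) (hg0 : ∀ x, 0 ≤ g x) (hp : 0 < p) {l : ℝ}
    (hl : l ≠ 0) : g l * ‖F (p * l)‖ ≤ M * A * p ^ (1 - β) := by
  have hl' : 0 < |l| := abs_pos.2 hl
  calc g l * ‖F (p * l)‖ ≤ M * |l| ^ (β - 1) * (A * |p * l| ^ (1 - β)) :=
        mul_le_mul (hg l hl) (hFA _) (norm_nonneg _) ((hg0 l).trans (hg l hl))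
    _ = M * A * p ^ (1 - β) * (|l| ^ (β - 1) * |l| ^ (1 - β)) := by
        rw [abs_mul, abs_of_pos hp, mul_rpow hp.le hl'.le]
        ring
    _ = M * A * p ^ (1 - β) := by
        rw [← rpow_add hl', show β - 1 + (1 - β) = 0 by ring, rpow_zero, mul_one]

lemma norm_integral_inner_le (hc : 0 < c) (hF : ∀ x, ‖F x‖ ≤ B * exp (-c * |x|))
    (hFA : ∀ x, ‖F x‖ ≤ A * |x| ^ (1 - β)) (hg0 : ∀ x, 0 ≤ g x)
    (hg : ∀ x ≠ 0, g x ≤ M * |x| ^ (β - 1)) (hp : 0 < p) (hq : 0 < q) (hs : 0 ≤ s)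
    (hw : ∀ l, ‖w l‖ ≤ s * g l * ‖F (p * l)‖) (L l₁ : ℝ) :
    ‖∫ l₃, ((‖F (q * (L - l₃))‖ ^ 2 : ℝ) : ℂ) * F (p * (l₃ - l₁)) * w l₃‖
      ≤ B ^ 3 * (s * (M * A * p ^ (1 - β))) * (2 / c * q⁻¹) := by
  have hFB := norm_le_of_norm_le_mul_exp hc.le hF
  have hB : 0 ≤ B := (norm_nonneg _).trans (hFB 0)
  refine (norm_integral_le_of_norm_le ((integrable_exp_neg_mul_abs_mul_sub hc hq L).const_mul
    (B ^ 3 * (s * (M * A * p ^ (1 - β))))) ?_).trans_eq ?_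
  · filter_upwards [volume.ae_ne 0] with l₃ hl₃
    have hw' : ‖w l₃‖ ≤ s * (M * A * p ^ (1 - β)) := (hw l₃).trans <| by
      rw [mul_assoc]; exact mul_le_mul_of_nonneg_left (mul_norm_comp_mul_le hFA hg hg0 hp hl₃) hs
    have hsq : ‖F (q * (L - l₃))‖ ^ 2 ≤ B * exp (-c * |q * (L - l₃)|) * B := by
      rw [sq]; exact mul_le_mul (hF _) (hFB _) (norm_nonneg _) ((norm_nonneg _).trans (hF _))
    calc ‖((‖F (q * (L - l₃))‖ ^ 2 : ℝ) : ℂ) * F (p * (l₃ - l₁)) * w l₃‖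
        = ‖F (q * (L - l₃))‖ ^ 2 * ‖F (p * (l₃ - l₁))‖ * ‖w l₃‖ := by
          rw [norm_mul, norm_mul, Complex.norm_real, norm_pow, norm_norm]
      _ ≤ B * exp (-c * |q * (L - l₃)|) * B * B * (s * (M * A * p ^ (1 - β))) := by
          gcongr
          exact hFB _
      _ = B ^ 3 * (s * (M * A * p ^ (1 - β))) * exp (-c * |q * (L - l₃)|) := by ring
  · rw [integral_const_mul, integral_exp_neg_mul_abs_mul_sub hc hq]

lemma norm_integral_middle_le (hβ : 0 < β) (hc : 0 < c) (hF : ∀ x, ‖F x‖ ≤ B * exp (-c * |x|))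
    (hg0 : ∀ x, 0 ≤ g x) (hg : ∀ x ≠ 0, g x ≤ M * |x| ^ (β - 1)) (hp : 0 < p) (hs : 0 ≤ s)
    (hw : ∀ l, ‖w l‖ ≤ s * g l * ‖F (p * l)‖) {D : ℝ}
    (hD : ∀ L l₁, ‖∫ l₃, ((‖F (q * (L - l₃))‖ ^ 2 : ℝ) : ℂ) * F (p * (l₃ - l₁)) * w l₃‖ ≤ D)
    (l₁ : ℝ) :
    ‖∫ l₂, ∫ l₃, ((‖F (q * (l₁ + l₂ - l₃))‖ ^ 2 : ℝ) : ℂ) * F (p * (l₁ + l₂)) *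
        F (p * (l₃ - l₁)) * (g l₁ : ℂ) * w l₂ * w l₃‖
      ≤ D * B ^ 2 * s * M * g l₁ * exp (-(c / 2) * |p * l₁|) *
        (2 * (1 / (c / 2)) ^ β * Gamma β * p ^ (-β)) := by
  have hB : 0 ≤ B := (norm_nonneg _).trans (norm_le_of_norm_le_mul_exp hc.le hF 0)
  have hD0 : 0 ≤ D := (norm_nonneg _).trans (hD 0 0)
  have hM : 0 ≤ M := by simpa using (hg0 1).trans (hg 1 one_ne_zero)
  refine norm_integral_le_of_norm_le_abs_rpow_mul_exp hβ (half_pos hc) hp fun l₂ hl₂ => ?_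
  have hw₂ : ‖w l₂‖ ≤ s * (M * |l₂| ^ (β - 1)) * (B * exp (-c * |p * l₂|)) :=
    (hw l₂).trans (by gcongr; exacts [hg l₂ hl₂, hF _])
  have hexp := exp_neg_mul_abs_add_mul_exp_le hc.le (p * l₁) (p * l₂)
  rw [← mul_add] at hexp
  have hsplit : ∀ l₃ : ℝ, ((‖F (q * (l₁ + l₂ - l₃))‖ ^ 2 : ℝ) : ℂ) * F (p * (l₁ + l₂)) *
      F (p * (l₃ - l₁)) * (g l₁ : ℂ) * w l₂ * w l₃ = (((‖F (q * (l₁ + l₂ - l₃))‖ ^ 2 : ℝ) : ℂ) *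
      F (p * (l₃ - l₁)) * w l₃) * (F (p * (l₁ + l₂)) * (g l₁ : ℂ) * w l₂) := fun _ => by ring
  simp_rw [hsplit]
  have hg₁ := hg0 l₁
  rw [integral_mul_const, norm_mul, norm_mul, norm_mul, Complex.norm_real,
    Real.norm_of_nonneg hg₁]
  calc ‖∫ l₃, ((‖F (q * (l₁ + l₂ - l₃))‖ ^ 2 : ℝ) : ℂ) * F (p * (l₃ - l₁)) * w l₃‖ *
        (‖F (p * (l₁ + l₂))‖ * g l₁ * ‖w l₂‖)
      ≤ D * (B * exp (-c * |p * (l₁ + l₂)|) * g l₁ *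
          (s * (M * |l₂| ^ (β - 1)) * (B * exp (-c * |p * l₂|)))) := by
        gcongr
        exacts [hD _ _, hF _]
    _ = D * B ^ 2 * s * M * g l₁ * |l₂| ^ (β - 1) *
          (exp (-c * |p * (l₁ + l₂)|) * exp (-c * |p * l₂|)) := by ring
    _ ≤ D * B ^ 2 * s * M * g l₁ * |l₂| ^ (β - 1) *
          (exp (-(c / 2) * |p * l₁|) * exp (-(c / 2) * |p * l₂|)) := by
        gcongr
    _ = _ := by ring

lemma exists_norm_triple_integral_le (hβ : 0 < β) (hc : 0 < c)
    (hF : ∀ x, ‖F x‖ ≤ B * exp (-c * |x|)) (hFA : ∀ x, ‖F x‖ ≤ A * |x| ^ (1 - β))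
    (hg0 : ∀ x, 0 ≤ g x) (hg : ∀ x ≠ 0, g x ≤ M * |x| ^ (β - 1)) :
    ∃ C ≥ 0, ∀ p > 0, ∀ q > 0, ∀ s ≥ 0, ∀ w : ℝ → ℂ, (∀ l, ‖w l‖ ≤ s * g l * ‖F (p * l)‖) →
      ‖∫ l₁, ∫ l₂, ∫ l₃, ((‖F (q * (l₁ + l₂ - l₃))‖ ^ 2 : ℝ) : ℂ) * F (p * (l₁ + l₂)) *
        F (p * (l₃ - l₁)) * (g l₁ : ℂ) * w l₂ * w l₃‖ ≤ C * (s ^ 2 * p ^ (1 - 3 * β) * q⁻¹) := by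
  have hB : 0 ≤ B := (norm_nonneg _).trans (norm_le_of_norm_le_mul_exp hc.le hF 0)
  have hA : 0 ≤ A := by simpa using (norm_nonneg _).trans (hFA 1)
  have hM : 0 ≤ M := by simpa using (hg0 1).trans (hg 1 one_ne_zero)
  have hΓ := Gamma_pos_of_pos hβ
  set I := 2 * (1 / (c / 2)) ^ β * Gamma β
  refine ⟨B ^ 5 * M ^ 3 * A * (2 / c) * I ^ 2, by positivity,
    fun p hp q hq s hs w hw => ?_⟩
  have hmiddle := norm_integral_middle_le hβ hc hF hg0 hg hp hs hw
    (norm_integral_inner_le hc hF hFA hg0 hg hp hq hs hw)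
  set D := B ^ 3 * (s * (M * A * p ^ (1 - β))) * (2 / c * q⁻¹)
  have hD : 0 ≤ D := by positivity
  refine (norm_integral_le_of_norm_le_abs_rpow_mul_exp hβ (half_pos hc) hp
    (C := D * B ^ 2 * s * M * M * (I * p ^ (-β))) fun l₁ hl₁ => ?_).trans_eq ?_
  · calc _ ≤ _ := hmiddle l₁
      _ ≤ D * B ^ 2 * s * M * (M * |l₁| ^ (β - 1)) * exp (-(c / 2) * |p * l₁|) *
            (I * p ^ (-β)) := by
          gcongr
          exact hg l₁ hl₁
      _ = _ := by ring
  · have hpow : p ^ (1 - 3 * β) = p ^ (1 - β) * p ^ (-β) * p ^ (-β) := by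
      rw [← rpow_add hp, ← rpow_add hp]
      ring_nf
    rw [hpow]
    ring

end TripleIntegral

lemma inv_sqrt_sq_le_of_mul_rpow_neg_le {σ c p β : ℝ} (hc : 0 < c) (hp : 0 < p)
    (h : c * p ^ (-β) ≤ σ) : (√σ)⁻¹ ^ 2 ≤ c⁻¹ * p ^ β := by
  have hσ : 0 < σ := lt_of_lt_of_le (by positivity) h
  rw [inv_pow, sq_sqrt hσ.le]
  calc σ⁻¹ ≤ (c * p ^ (-β))⁻¹ := inv_anti₀ (by positivity) h
    _ = c⁻¹ * p ^ β := by rw [mul_inv, rpow_neg hp.le, inv_inv]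

theorem stmt_18_general
    (β : ℝ) (hβ : β ∈ Set.Ioo (0 : ℝ) 1)
    (C_G : ℝ → ℝ) (hCG_cont : Continuous C_G) (hCG_bdd : ∃ M : ℝ, ∀ x, C_G x ≤ M)
    (hCG0 : 0 < C_G 0)
    (f_G : ℝ → ℝ) (hfG_nonneg : ∀ x, 0 ≤ f_G x)
    (hfG : ∀ x : ℝ, x ≠ 0 → f_G x = C_G x * |x| ^ (β - 1))
    (hfG_int : Integrable f_G)
    (ψ : ℝ → ℝ)
    (α K κ : ℝ) (hα : 1 ≤ α) (hK : 0 < K) (hκ : 0 < κ)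
    (Cψ : ℝ → ℂ) (hCψ_cont : Continuous Cψ)
    (hCψ0 : 0 < (Cψ 0).re ∧ (Cψ 0).im = 0)
    (hCψ_bdd : ∀ l : ℝ, ‖Cψ l‖ ≤ K * Real.exp (-κ * |l|))
    (hhat : ∀ l : ℝ, fhat ψ l = Cψ l * ((|l| ^ α : ℝ) : ℂ))
    (sigma2 : ℕ → ℝ)
    (hsigma2 : ∀ j : ℕ, sigma2 j =
      ∫ l : ℝ, f_G l * ‖fhat ψ ((2 : ℝ) ^ j * l)‖ ^ 2)
    (fc : ℕ → ℝ → ℂ)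
    (hfc : ∀ j : ℕ, ∀ l : ℝ,
      fc j l = ((((Real.sqrt (sigma2 j))⁻¹ * f_G l : ℝ)) : ℂ) *
        (starRingEnd ℂ) (fhat ψ ((2 : ℝ) ^ j * l)))
    (j₂ : ℕ → ℕ) :
    ∃ Cst > (0 : ℝ), ∃ J : ℕ, ∀ j ≥ J,
      ‖(∫ l₁ : ℝ, ∫ l₂ : ℝ, ∫ l₃ : ℝ,
          ((‖fhat ψ ((2 : ℝ) ^ (j₂ j) * (l₁ + l₂ - l₃))‖ ^ 2 : ℝ) : ℂ) *
            fhat ψ ((2 : ℝ) ^ j * (l₁ + l₂)) * fhat ψ ((2 : ℝ) ^ j * (l₃ - l₁)) *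
            ((f_G l₁ : ℝ) : ℂ) * fc j l₂ * fc j l₃)‖
      ≤ Cst * ((2 : ℝ) ^ ((j : ℝ) * (1 - 2 * β)) * (2 : ℝ) ^ (-(j₂ j : ℝ))) := by
  obtain ⟨hβ0, hβ1⟩ := hβ
  obtain ⟨M, hM⟩ := hCG_bdd
  have hfG_le : ∀ x ≠ 0, f_G x ≤ M * |x| ^ (β - 1) := fun x hx =>
    hfG x hx ▸ mul_le_mul_of_nonneg_right (hM x) (by positivity)
  have hnorm : ∀ x, ‖fhat ψ x‖ = ‖Cψ x‖ * |x| ^ α := fun x => by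
    rw [hhat, norm_mul, Complex.norm_real, Real.norm_of_nonneg (by positivity)]
  have hdecay : ∀ x, ‖fhat ψ x‖ ≤ K * |x| ^ α * exp (-κ * |x|) := fun x => by
    rw [hnorm, mul_right_comm]
    exact mul_le_mul_of_nonneg_right (hCψ_bdd x) (by positivity)
  obtain ⟨B, hB⟩ := exists_norm_le_mul_exp_of_norm_le hK.le (by linarith) hκ hdecay
  obtain ⟨A, hA⟩ :=
    exists_norm_le_mul_abs_rpow_of_norm_le hK.le (sub_pos.2 hβ1) (by linarith) hκ hdecay
  obtain ⟨C, hC0, hC⟩ := exists_norm_triple_integral_le hβ0 (half_pos hκ) hB hA hfG_nonneg hfG_le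
  have hcont : Continuous (fhat ψ) := by
    rw [funext hhat]
    exact hCψ_cont.mul (by fun_prop (disch := linarith))
  have hCψ0' : 0 < ‖Cψ 0‖ := norm_pos_iff.2 fun h => by simp [h] at hCψ0
  obtain ⟨c₀, hc₀, hσ⟩ := exists_mul_rpow_neg_le_integral (by linarith) hβ1.le
    (half_pos hCG0) (half_pos hCψ0') hfG_nonneg hfG_int hcont
    (norm_le_of_norm_le_mul_exp (half_pos hκ).le hB)
    (eventually_half_mul_rpow_le hCG_cont.continuousAt hCG0 fun x hx => by
      rw [hfG x hx.ne', abs_of_pos hx])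
    (eventually_half_mul_rpow_le (r := α) hCψ_cont.norm.continuousAt hCψ0' fun x hx => by
      rw [hnorm, abs_of_pos hx])
  refine ⟨C / c₀ + 1, by positivity, 0, fun j _ => ?_⟩
  have hs2 := inv_sqrt_sq_le_of_mul_rpow_neg_le hc₀ (by positivity)
    (hsigma2 j ▸ hσ _ (one_le_pow₀ one_le_two))
  have hw : ∀ l, ‖fc j l‖ ≤ (√(sigma2 j))⁻¹ * f_G l * ‖fhat ψ (2 ^ j * l)‖ := fun l => by
    have := hfG_nonneg l
    rw [hfc, norm_mul, Complex.norm_conj, Complex.norm_real, Real.norm_of_nonneg (by positivity)]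
  calc _ ≤ C * ((√(sigma2 j))⁻¹ ^ 2 * ((2 : ℝ) ^ j) ^ (1 - 3 * β) * ((2 : ℝ) ^ j₂ j)⁻¹) :=
        hC _ (by positivity) _ (by positivity) _ (by positivity) (fc j) hw
    _ ≤ C * (c₀⁻¹ * ((2 : ℝ) ^ j) ^ β * ((2 : ℝ) ^ j) ^ (1 - 3 * β) * ((2 : ℝ) ^ j₂ j)⁻¹) := by
        gcongr
    _ = C / c₀ * ((2 : ℝ) ^ ((j : ℝ) * (1 - 2 * β)) * (2 : ℝ) ^ (-(j₂ j : ℝ))) := by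
        rw [mul_assoc c₀⁻¹, ← rpow_add (by positivity), ← rpow_natCast, ← rpow_mul zero_le_two,
          rpow_neg zero_le_two, rpow_natCast, show β + (1 - 3 * β) = 1 - 2 * β by ring]
        ring
    _ ≤ _ := by gcongr; linarith

theorem stmt_18
    (β : ℝ) (hβ : β ∈ Set.Ioo (0 : ℝ) 1)
    (C_G : ℝ → ℝ) (hCG_cont : Continuous C_G) (hCG_bdd : ∃ M : ℝ, ∀ x, C_G x ≤ M)
    (hCG_nonneg : ∀ x, 0 ≤ C_G x) (hCG_even : ∀ x, C_G (-x) = C_G x)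
    (hCG0 : 0 < C_G 0)
    (f_G : ℝ → ℝ) (hfG_nonneg : ∀ x, 0 ≤ f_G x)
    (hfG : ∀ x : ℝ, x ≠ 0 → f_G x = C_G x * |x| ^ (β - 1))
    (hfG_int : Integrable f_G)
    (ψ : ℝ → ℝ) (hψ_int : Integrable ψ) (hψ_sq : Integrable (fun t => (ψ t) ^ 2))
    (hψ_zero : (∫ t : ℝ, ψ t) = 0)
    (α K κ : ℝ) (hα : 1 ≤ α) (hK : 0 < K) (hκ : 0 < κ)
    (Cψ : ℝ → ℂ) (hCψ_cont : Continuous Cψ)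
    (hCψ0 : 0 < (Cψ 0).re ∧ (Cψ 0).im = 0)
    (hCψ_bdd : ∀ l : ℝ, ‖Cψ l‖ ≤ K * Real.exp (-κ * |l|))
    (hhat : ∀ l : ℝ, fhat ψ l = Cψ l * ((|l| ^ α : ℝ) : ℂ))
    (sigma2 : ℕ → ℝ)
    (hsigma2 : ∀ j : ℕ, sigma2 j =
      ∫ l : ℝ, f_G l * ‖fhat ψ ((2 : ℝ) ^ j * l)‖ ^ 2)
    (fc : ℕ → ℝ → ℂ)
    (hfc : ∀ j : ℕ, ∀ l : ℝ,
      fc j l = ((((Real.sqrt (sigma2 j))⁻¹ * f_G l : ℝ)) : ℂ) *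
        (starRingEnd ℂ) (fhat ψ ((2 : ℝ) ^ j * l)))
    (j₂ : ℕ → ℕ)
    (hj₂ : 1 < Filter.liminf (fun j : ℕ => (j₂ j : ℝ) / (j : ℝ)) atTop) :
    ∃ Cst > (0 : ℝ), ∃ J : ℕ, ∀ j ≥ J,
      ‖(∫ l₁ : ℝ, ∫ l₂ : ℝ, ∫ l₃ : ℝ,
          ((‖fhat ψ ((2 : ℝ) ^ (j₂ j) * (l₁ + l₂ - l₃))‖ ^ 2 : ℝ) : ℂ) *
            fhat ψ ((2 : ℝ) ^ j * (l₁ + l₂)) * fhat ψ ((2 : ℝ) ^ j * (l₃ - l₁)) *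
            ((f_G l₁ : ℝ) : ℂ) * fc j l₂ * fc j l₃)‖
      ≤ Cst * ((2 : ℝ) ^ ((j : ℝ) * (1 - 2 * β)) * (2 : ℝ) ^ (-(j₂ j : ℝ))) :=
  stmt_18_general β hβ C_G hCG_cont hCG_bdd hCG0 f_G hfG_nonneg hfG hfG_int ψ α K κ hα hK hκ Cψ
    hCψ_cont hCψ0 hCψ_bdd hhat sigma2 hsigma2 fc hfc j₂
end
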